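/- arXiv:math/0608523 — 11 statements merged into one kernel-verified Lean document; each statement's English description precedes it below -/
import Mathlib

section
/- Let (v_n)_{n≥0} be a Cauchy sequence in Γ₀ for the tree metric ρ. Then exactly one of the following holds: either (v_n) is eventually equal to some constant finite word v (and hence converges to v), or there is a unique infinite word z over {a,b} such that ρ(v_n, z|_n) → 0 as n → ∞. -/
/-- The prefix of length `n` of the infinite word `z : ℕ → Bool`
(letters `a`/`b` are modeled as the two elements of `Bool`). -/
def prefixWord (z : ℕ → Bool) (n : ℕ) : List Bool := (List.range n).map z

/-- `z` is periodic with period `p ≥ 1`: `z (i + p) = z i` for all `i`. -/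
def IsPeriodicWith (z : ℕ → Bool) (p : ℕ) : Prop := 1 ≤ p ∧ ∀ i, z (i + p) = z i

/-- `z` is a periodic infinite word. -/
def IsPeriodicWord (z : ℕ → Bool) : Prop := ∃ p, IsPeriodicWith z p

/-- The minimal period of `z` (junk value `0` if `z` is not periodic). -/
noncomputable def minPeriod (z : ℕ → Bool) : ℕ := sInf {p | IsPeriodicWith z p}

/-- The finite word `v` occurs in `z` as a contiguous segment starting at position `n`. -/
def OccursAt (v : List Bool) (z : ℕ → Bool) (n : ℕ) : Prop :=
  ∀ i < v.length, z (n + i) = v.getD i false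

/-- The finite word `v` occurs somewhere in `z` as a contiguous segment. -/
def Occurs (v : List Bool) (z : ℕ → Bool) : Prop := ∃ n, OccursAt v z n

/-- The minimal potential period `p₀ v` of a finite word `v`: the minimum, over all
periodic infinite words `z` in which `v` occurs, of the minimal period of `z`;
`p₀` of the empty word is `0`. -/
noncomputable def p0 (v : List Bool) : ℕ :=
  if v = [] then 0
  else sInf {p | ∃ z : ℕ → Bool, IsPeriodicWord z ∧ Occurs v z ∧ minPeriod z = p}

/-- The `d`-length of a finite word: the sum of the lengths `d (w|_i)` of the tree
edges along the path from the empty word to `w` (the edge joining a nonempty word `u`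
to the word obtained by deleting its last letter has length `d u`). -/
noncomputable def dLength (d : List Bool → ℝ) (w : List Bool) : ℝ :=
  ∑ i ∈ Finset.range w.length, d (w.take (i + 1))

/-- The longest common prefix of two finite words. -/
def lcp : List Bool → List Bool → List Bool
  | a :: u, b :: v => if a = b then a :: lcp u v else []
  | _, _ => []

/-- The tree metric on finite words induced by the edge lengths `d`:
`ρ(u,v) = l_d(u) + l_d(v) − 2 l_d(u ∧ v)`. -/
noncomputable def treeDist (d : List Bool → ℝ) (u v : List Bool) : ℝ :=
  dLength d u + dLength d v - 2 * dLength d (lcp u v)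

/-- The specific edge lengths `d(u) = 2 ^ (−p₀ u)` used in the counterexample. -/
noncomputable def dEdge (u : List Bool) : ℝ := 2 ^ (-(p0 u : ℤ))

/-- Prepending a finite word `w` to an infinite word `z`. -/
def prependWord (w : List Bool) (z : ℕ → Bool) : ℕ → Bool :=
  fun i => if i < w.length then w.getD i false else z (i - w.length)

/-
The distance `ρ(u, w)` is the total length of the edges of `u` and of `w` lying below their
branch point `lcp u w`. Only finitely many words have length `≤ m`, so all edges down to depth
`m` are longer than some `δ > 0`, and two words at distance `< δ` have the same first `m`
letters. Along a Cauchy sequence every prefix of fixed length therefore stabilises. If the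
lengths do not tend to infinity, a stabilised "prefix" is the whole word and the sequence is
eventually constant; otherwise the stabilised prefixes define an infinite word `z`, and
`ρ(v n, z|_n) ≤ ρ(v n, v k) + ρ(v n, v N)` for suitable `k` and fixed `N` with `|v N| ≤ n`.
Conversely, `ρ(v n, z|_n) → 0` forces the prefixes of `v n` to converge to those of `z`,
which makes `z` unique and rules out eventual constancy.
-/

open Filter Topology

namespace TreeWord

lemma prefixWord_length (z : ℕ → Bool) (n : ℕ) : (prefixWord z n).length = n := by
  simp [prefixWord]

lemma prefixWord_take (z : ℕ → Bool) {m n : ℕ} (h : m ≤ n) :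
    (prefixWord z n).take m = prefixWord z m := by
  simp [prefixWord, ← List.map_take, List.take_range, min_eq_left h]

lemma prefixWord_getD (z : ℕ → Bool) {m i : ℕ} (h : i < m) :
    (prefixWord z m).getD i false = z i := by
  simp [prefixWord, h]

lemma prefixWord_inj {z z' : ℕ → Bool} (h : ∀ m, prefixWord z m = prefixWord z' m) : z = z' :=
  funext fun i => by
    rw [← prefixWord_getD z i.lt_succ_self, h, prefixWord_getD z' i.lt_succ_self]

lemma take_eq_prefixWord {u : List Bool} {z : ℕ → Bool} {m : ℕ} (hm : m ≤ u.length)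
    (hz : ∀ i < m, u.getD i false = z i) : u.take m = prefixWord z m := by
  apply List.ext_getElem (by simp [prefixWord, hm])
  intro i hi _
  have him : i < m := by simp at hi; omega
  have hzi := hz i him
  rw [List.getD_eq_getElem _ _ (him.trans_le hm)] at hzi
  simpa [prefixWord] using hzi

lemma getD_eq_of_take_eq {u w : List Bool} {m i : ℕ} (h : u.take m = w.take m) (hi : i < m) :
    u.getD i false = w.getD i false := by
  have := congrArg (fun l : List Bool => l.getD i false) h
  simpa [List.getD_eq_getElem?_getD, List.getElem?_take, hi] using this

lemma eq_of_take_eq_of_length_lt {u w : List Bool} {m : ℕ} (h : u.take m = w.take m)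
    (hw : w.length < m) : u = w := by
  have hu : u.length < m := by
    have := congrArg List.length h
    simp only [List.length_take] at this
    omega
  rwa [List.take_of_length_le hu.le, List.take_of_length_le hw.le] at h

lemma lcp_comm : ∀ u w : List Bool, lcp u w = lcp w u
  | [], [] | [], _ :: _ | _ :: _, [] => by simp [lcp]
  | a :: u, b :: w => by
    by_cases h : a = b
    · simp [lcp, h, lcp_comm u w]
    · simp [lcp, h, Ne.symm h]

lemma lcp_prefix_left : ∀ u w : List Bool, lcp u w <+: u
  | [], _ | _ :: _, [] => by simp [lcp]
  | a :: u, b :: w => by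
    by_cases h : a = b
    · simpa [lcp, h] using lcp_prefix_left u w
    · simp [lcp, h]

lemma lcp_prefix_right (u w : List Bool) : lcp u w <+: w :=
  lcp_comm u w ▸ lcp_prefix_left w u

lemma take_eq_take_of_prefix {p u : List Bool} {m : ℕ} (hp : p <+: u) (hm : m ≤ p.length) :
    u.take m = p.take m := by
  rw [List.prefix_iff_eq_take.mp hp, List.take_take, min_eq_left hm]

lemma take_eq_take_of_le_length_lcp {u w : List Bool} {m : ℕ} (h : m ≤ (lcp u w).length) :
    u.take m = w.take m :=
  (take_eq_take_of_prefix (lcp_prefix_left u w) h).trans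
    (take_eq_take_of_prefix (lcp_prefix_right u w) h).symm

lemma lcp_take_right : ∀ (u w : List Bool) (n : ℕ), lcp u (w.take n) = (lcp u w).take n
  | [], _, _ | _ :: _, [], _ | _ :: _, _ :: _, 0 => by simp [lcp]
  | a :: u, b :: w, n + 1 => by
    by_cases h : a = b
    · simp [lcp, h, lcp_take_right u w n]
    · simp [lcp, h]

/-- `l_d(w) - l_d(w|_m)`, the length of the part of the path to `w` below depth `m`. -/
noncomputable def dTail (d : List Bool → ℝ) (w : List Bool) (m : ℕ) : ℝ :=
  ∑ i ∈ Finset.Ico m w.length, d (w.take (i + 1))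

lemma dTail_of_length_le (d : List Bool → ℝ) {w : List Bool} {m : ℕ} (h : w.length ≤ m) :
    dTail d w m = 0 := by
  rw [dTail, Finset.Ico_eq_empty_of_le h, Finset.sum_empty]

lemma dLength_eq_add_dTail (d : List Bool → ℝ) {w : List Bool} {m : ℕ} (h : m ≤ w.length) :
    dLength d w = dLength d (w.take m) + dTail d w m := by
  have htake : dLength d (w.take m) = ∑ i ∈ Finset.range m, d (w.take (i + 1)) := by
    rw [dLength, List.length_take, min_eq_left h]
    refine Finset.sum_congr rfl fun i hi => ?_
    rw [List.take_take, min_eq_left (Finset.mem_range.mp hi)]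
  rw [htake, dTail, dLength, Finset.range_eq_Ico, Finset.range_eq_Ico,
    Finset.sum_Ico_consecutive _ (Nat.zero_le m) h]

lemma treeDist_eq_dTail_add_dTail (d : List Bool → ℝ) (u w : List Bool) :
    treeDist d u w = dTail d u (lcp u w).length + dTail d w (lcp u w).length := by
  have hu := lcp_prefix_left u w
  have hw := lcp_prefix_right u w
  rw [treeDist, dLength_eq_add_dTail d hu.length_le, dLength_eq_add_dTail d hw.length_le,
    ← List.prefix_iff_eq_take.mp hu, ← List.prefix_iff_eq_take.mp hw]
  ring

lemma treeDist_comm (d : List Bool → ℝ) (u w : List Bool) : treeDist d u w = treeDist d w u := by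
  rw [treeDist, treeDist, lcp_comm]
  ring

lemma take_succ_ne_nil {w : List Bool} {i : ℕ} (hi : i < w.length) : w.take (i + 1) ≠ [] := by
  simp only [ne_eq, List.take_eq_nil_iff]
  rintro (h | rfl) <;> simp_all

lemma edge_pos {d : List Bool → ℝ} (hd : ∀ w : List Bool, w ≠ [] → 0 < d w) {w : List Bool}
    {i : ℕ} (hi : i < w.length) : 0 < d (w.take (i + 1)) :=
  hd _ (take_succ_ne_nil hi)

lemma dTail_nonneg {d : List Bool → ℝ} (hd : ∀ w : List Bool, w ≠ [] → 0 < d w)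
    (w : List Bool) (m : ℕ) : 0 ≤ dTail d w m :=
  Finset.sum_nonneg fun _ hi => (edge_pos hd (Finset.mem_Ico.mp hi).2).le

lemma dTail_antitone {d : List Bool → ℝ} (hd : ∀ w : List Bool, w ≠ [] → 0 < d w)
    (w : List Bool) : Antitone (dTail d w) := fun _ _ h =>
  Finset.sum_le_sum_of_subset_of_nonneg (Finset.Ico_subset_Ico h le_rfl)
    fun _ hi _ => (edge_pos hd (Finset.mem_Ico.mp hi).2).le

lemma edge_le_dTail {d : List Bool → ℝ} (hd : ∀ w : List Bool, w ≠ [] → 0 < d w)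
    {w : List Bool} {m : ℕ} (h : m < w.length) : d (w.take (m + 1)) ≤ dTail d w m :=
  Finset.single_le_sum (f := fun i => d (w.take (i + 1)))
    (fun _ hi => (edge_pos hd (Finset.mem_Ico.mp hi).2).le) (Finset.mem_Ico.mpr ⟨le_rfl, h⟩)

lemma dTail_take_le {d : List Bool → ℝ} (hd : ∀ w : List Bool, w ≠ [] → 0 < d w)
    (w : List Bool) (n m : ℕ) : dTail d (w.take n) m ≤ dTail d w m := by
  rw [dTail, List.length_take]
  calc ∑ i ∈ Finset.Ico m (min n w.length), d ((w.take n).take (i + 1))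
      = ∑ i ∈ Finset.Ico m (min n w.length), d (w.take (i + 1)) :=
        Finset.sum_congr rfl fun i hi => by
          rw [List.take_take, min_eq_left (by simp at hi; omega)]
    _ ≤ dTail d w m :=
        Finset.sum_le_sum_of_subset_of_nonneg (Finset.Ico_subset_Ico le_rfl (min_le_right _ _))
          fun _ hi _ => (edge_pos hd (Finset.mem_Ico.mp hi).2).le

lemma treeDist_nonneg {d : List Bool → ℝ} (hd : ∀ w : List Bool, w ≠ [] → 0 < d w)
    (u w : List Bool) : 0 ≤ treeDist d u w := by
  rw [treeDist_eq_dTail_add_dTail]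
  exact add_nonneg (dTail_nonneg hd _ _) (dTail_nonneg hd _ _)

lemma dTail_le_treeDist {d : List Bool → ℝ} (hd : ∀ w : List Bool, w ≠ [] → 0 < d w)
    {u w : List Bool} {m : ℕ} (h : (lcp u w).length ≤ m) : dTail d u m ≤ treeDist d u w := by
  rw [treeDist_eq_dTail_add_dTail]
  linarith [dTail_antitone hd u h, dTail_nonneg hd w (lcp u w).length]

lemma treeDist_take_right_le {d : List Bool → ℝ} (hd : ∀ w : List Bool, w ≠ [] → 0 < d w)
    (u w : List Bool) (n : ℕ) :
    treeDist d u (w.take n) ≤ treeDist d u w + dTail d u n := by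
  have hlcp : (lcp u (w.take n)).length = min (lcp u w).length n := by
    rw [lcp_take_right, List.length_take, min_comm]
  rw [treeDist_eq_dTail_add_dTail, hlcp]
  rcases le_total n (lcp u w).length with h | h
  · rw [min_eq_right h, dTail_of_length_le d (List.length_take_le n w)]
    linarith [treeDist_nonneg hd u w]
  · rw [min_eq_left h, treeDist_eq_dTail_add_dTail]
    linarith [dTail_take_le hd w n (lcp u w).length, dTail_nonneg hd u n]

lemma edge_le_treeDist {d : List Bool → ℝ} (hd : ∀ w : List Bool, w ≠ [] → 0 < d w)
    {u w : List Bool} (h : (lcp u w).length < u.length) :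
    d (u.take ((lcp u w).length + 1)) ≤ treeDist d u w :=
  (edge_le_dTail hd h).trans (dTail_le_treeDist hd le_rfl)

lemma exists_pos_le_edge {d : List Bool → ℝ} (hd : ∀ w : List Bool, w ≠ [] → 0 < d w) (m : ℕ) :
    ∃ δ > 0, ∀ u : List Bool, u ≠ [] → u.length ≤ m → δ ≤ d u := by
  have hfin : {u : List Bool | u ≠ [] ∧ u.length ≤ m}.Finite :=
    (List.finite_length_le Bool m).subset fun _ hu => hu.2
  have hδ : ∀ᶠ δ in 𝓝[>] (0 : ℝ), 0 < δ ∧ ∀ u ∈ {u : List Bool | u ≠ [] ∧ u.length ≤ m}, δ ≤ d u :=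
    eventually_mem_nhdsWithin.and <| (eventually_all_finite hfin).2 fun u hu =>
      nhdsWithin_le_nhds (eventually_le_nhds (hd u hu.1))
  obtain ⟨δ, hδ0, hδd⟩ := hδ.exists
  exact ⟨δ, hδ0, fun u hu hm => hδd u ⟨hu, hm⟩⟩

lemma length_le_length_lcp_of_treeDist_lt {d : List Bool → ℝ}
    (hd : ∀ w : List Bool, w ≠ [] → 0 < d w) {δ : ℝ} {m : ℕ}
    (hδ : ∀ u : List Bool, u ≠ [] → u.length ≤ m → δ ≤ d u) {u w : List Bool}
    (h : treeDist d u w < δ) (hm : (lcp u w).length < m) : u.length ≤ (lcp u w).length := by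
  by_contra! hu
  have := hδ _ (take_succ_ne_nil hu) (by rw [List.length_take]; omega)
  linarith [edge_le_treeDist hd hu]

lemma take_eq_take_of_treeDist_lt {d : List Bool → ℝ} (hd : ∀ w : List Bool, w ≠ [] → 0 < d w)
    {δ : ℝ} {m : ℕ} (hδ : ∀ u : List Bool, u ≠ [] → u.length ≤ m → δ ≤ d u)
    {u w : List Bool} (h : treeDist d u w < δ) : u.take m = w.take m := by
  rcases le_or_gt m (lcp u w).length with hm | hm
  · exact take_eq_take_of_le_length_lcp hm
  have hu := length_le_length_lcp_of_treeDist_lt hd hδ h hm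
  have hw := length_le_length_lcp_of_treeDist_lt hd hδ (u := w) (w := u)
    (by rwa [treeDist_comm]) (by rwa [lcp_comm])
  rw [lcp_comm] at hw
  have hlcp_u := (lcp_prefix_left u w).eq_of_length (hu.antisymm' (lcp_prefix_left u w).length_le)
  have hlcp_w := (lcp_prefix_right u w).eq_of_length (hw.antisymm' (lcp_prefix_right u w).length_le)
  rw [← hlcp_u, hlcp_w]

def TreeCauchy (d : List Bool → ℝ) (v : ℕ → List Bool) : Prop :=
  ∀ ε : ℝ, 0 < ε → ∃ N : ℕ, ∀ m ≥ N, ∀ n ≥ N, treeDist d (v m) (v n) < ε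

def IsPrefixLimit (v : ℕ → List Bool) (z : ℕ → Bool) : Prop :=
  ∀ m, ∀ᶠ n in atTop, (v n).take m = prefixWord z m

lemma IsPrefixLimit.unique {v : ℕ → List Bool} {z z' : ℕ → Bool} (hz : IsPrefixLimit v z)
    (hz' : IsPrefixLimit v z') : z = z' :=
  prefixWord_inj fun m =>
    let ⟨_, hn, hn'⟩ := ((hz m).and (hz' m)).exists
    hn.symm.trans hn'

lemma not_isPrefixLimit_of_eventually_eq {v : ℕ → List Bool} {w : List Bool}
    (hw : ∀ᶠ n in atTop, v n = w) (z : ℕ → Bool) : ¬IsPrefixLimit v z := fun hz =>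
  let ⟨n, hn, hzn⟩ := (hw.and (hz (w.length + 1))).exists
  by simpa [hn, prefixWord_length] using congrArg List.length hzn

lemma isPrefixLimit_of_tendsto {d : List Bool → ℝ} (hd : ∀ w : List Bool, w ≠ [] → 0 < d w)
    {v : ℕ → List Bool} {z : ℕ → Bool}
    (hz : Tendsto (fun n => treeDist d (v n) (prefixWord z n)) atTop (𝓝 0)) :
    IsPrefixLimit v z := fun m => by
  obtain ⟨δ, hδ, hδd⟩ := exists_pos_le_edge hd m
  filter_upwards [hz.eventually (gt_mem_nhds hδ), eventually_ge_atTop m] with n hn hmn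
  rw [take_eq_take_of_treeDist_lt hd hδd hn, prefixWord_take z hmn]

lemma TreeCauchy.eventually_take_eq {d : List Bool → ℝ}
    (hd : ∀ w : List Bool, w ≠ [] → 0 < d w) {v : ℕ → List Bool} (hv : TreeCauchy d v) (m : ℕ) :
    ∃ N, ∀ n ≥ N, (v n).take m = (v N).take m := by
  obtain ⟨δ, hδ, hδd⟩ := exists_pos_le_edge hd m
  obtain ⟨N, hN⟩ := hv δ hδ
  exact ⟨N, fun n hn => take_eq_take_of_treeDist_lt hd hδd (hN n hn N le_rfl)⟩

lemma TreeCauchy.exists_isPrefixLimit {d : List Bool → ℝ}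
    (hd : ∀ w : List Bool, w ≠ [] → 0 < d w) {v : ℕ → List Bool} (hv : TreeCauchy d v)
    (hnconst : ¬∃ w, ∀ᶠ n in atTop, v n = w) : ∃ z, IsPrefixLimit v z := by
  choose N hN using hv.eventually_take_eq hd
  have hlength : ∀ m, m ≤ (v (N m)).length := fun m => by
    by_contra! hlt
    exact hnconst ⟨v (N m), eventually_atTop.2
      ⟨N m, fun n hn => eq_of_take_eq_of_length_lt (hN m n hn) hlt⟩⟩
  set z : ℕ → Bool := fun i => (v (N (i + 1))).getD i false
  refine ⟨z, fun m => ?_⟩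
  have hletters : ∀ᶠ n in atTop, ∀ i ∈ Set.Iio m, (v n).getD i false = z i :=
    (eventually_all_finite (Set.finite_Iio m)).2 fun i _ =>
      eventually_atTop.2 ⟨N (i + 1), fun n hn => getD_eq_of_take_eq (hN _ n hn) i.lt_succ_self⟩
  filter_upwards [hletters, eventually_ge_atTop (N m)] with n hn hNn
  refine take_eq_prefixWord ?_ hn
  have hlen := congrArg List.length (hN m n hNn)
  simp only [List.length_take] at hlen
  have := hlength m
  omega

lemma TreeCauchy.tendsto_of_isPrefixLimit {d : List Bool → ℝ}
    (hd : ∀ w : List Bool, w ≠ [] → 0 < d w) {v : ℕ → List Bool} (hv : TreeCauchy d v)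
    {z : ℕ → Bool} (hz : IsPrefixLimit v z) :
    Tendsto (fun n => treeDist d (v n) (prefixWord z n)) atTop (𝓝 0) := by
  refine Metric.tendsto_atTop.2 fun ε hε => ?_
  obtain ⟨N, hN⟩ := hv (ε / 2) (half_pos hε)
  refine ⟨max N (v N).length, fun n hn => ?_⟩
  obtain ⟨k, hkz, hkN⟩ := ((hz n).and (eventually_ge_atTop N)).exists
  have hnN : N ≤ n := le_of_max_le_left hn
  have htail : dTail d (v n) n ≤ treeDist d (v n) (v N) :=
    dTail_le_treeDist hd ((lcp_prefix_right _ _).length_le.trans (le_of_max_le_right hn))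
  rw [Real.dist_0_eq_abs, abs_of_nonneg (treeDist_nonneg hd _ _)]
  calc treeDist d (v n) (prefixWord z n)
      = treeDist d (v n) ((v k).take n) := by rw [hkz]
    _ ≤ treeDist d (v n) (v k) + dTail d (v n) n := treeDist_take_right_le hd _ _ _
    _ < ε := by linarith [hN n hnN k hkN, hN n hnN N le_rfl]

end TreeWord

open TreeWord

/-- Dichotomy for Cauchy sequences of finite words under the tree metric: a sequence
`(v_n)` that is Cauchy for the tree metric `ρ` (with positive edge lengths `d`) either
is eventually equal to some constant finite word, or there is a unique infinite word
`z` with `ρ(v_n, z|_n) → 0`; and exactly one of the two alternatives holds. -/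
theorem cauchy_dichotomy
    (d : List Bool → ℝ) (hd : ∀ w : List Bool, w ≠ [] → 0 < d w)
    (v : ℕ → List Bool)
    (hv : ∀ ε : ℝ, 0 < ε → ∃ N : ℕ, ∀ m ≥ N, ∀ n ≥ N,
      treeDist d (v m) (v n) < ε) :
    Xor'
      (∃ w : List Bool, ∀ᶠ n in Filter.atTop, v n = w)
      (∃! z : ℕ → Bool,
        Filter.Tendsto (fun n => treeDist d (v n) (prefixWord z n))
          Filter.atTop (nhds 0)) := by
  have hv : TreeCauchy d v := hv
  by_cases hconst : ∃ w : List Bool, ∀ᶠ n in atTop, v n = w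
  · obtain ⟨w, hw⟩ := hconst
    refine Or.inl ⟨⟨w, hw⟩, fun ⟨z, hz, _⟩ => ?_⟩
    exact not_isPrefixLimit_of_eventually_eq hw z (isPrefixLimit_of_tendsto hd hz)
  · obtain ⟨z, hz⟩ := hv.exists_isPrefixLimit hd hconst
    refine Or.inr ⟨⟨z, hv.tendsto_of_isPrefixLimit hd hz, fun z' hz' => ?_⟩, hconst⟩
    exact (isPrefixLimit_of_tendsto hd hz').unique hz
end

section
/- Let v be a nonempty finite word over {a,b}, and let z and y be two periodic infinite words, each of minimal period equal to p₀(v), in which v occurs. Then the repeat block of y (its initial block of length p₀(v)) is a cyclic permutation (rotation) of the repeat block of z. -/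

lemma periodic_mod {z : ℕ → Bool} {p : ℕ} (h : IsPeriodicWith z p) :
    ∀ j, z j = z (j % p) := by
  intro j
  induction j using Nat.strong_induction_on with
  | _ j ih =>
    rcases lt_or_ge j p with hj | hj
    · rw [Nat.mod_eq_of_lt hj]
    · have hp := h.1
      have hlt : j - p < j := Nat.sub_lt (lt_of_lt_of_le hp hj) hp
      have e1 : z j = z (j - p) := by
        have := h.2 (j - p)
        rwa [Nat.sub_add_cancel hj] at this
      rw [e1, ih (j - p) hlt, Nat.mod_eq_sub_mod hj]

lemma minPeriod_isPeriodicWith {z : ℕ → Bool} (h : IsPeriodicWord z) :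
    IsPeriodicWith z (minPeriod z) :=
  Nat.sInf_mem h

lemma p0_le_length (v : List Bool) (hv : v ≠ []) : p0 v ≤ v.length := by
  have hvl : 1 ≤ v.length := List.length_pos_iff.mpr hv
  set z0 : ℕ → Bool := fun i => v.getD (i % v.length) false with hz0
  have hper : IsPeriodicWith z0 v.length := by
    refine ⟨hvl, fun i => ?_⟩
    simp [hz0, Nat.add_mod_right]
  have hocc : Occurs v z0 := by
    refine ⟨0, fun i hi => ?_⟩
    simp [hz0, Nat.mod_eq_of_lt hi]
  have h1 : minPeriod z0 ≤ v.length := Nat.sInf_le hper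
  have h2 : p0 v ≤ minPeriod z0 := by
    rw [p0, if_neg hv]
    exact Nat.sInf_le ⟨z0, ⟨v.length, hper⟩, hocc, rfl⟩
  exact le_trans h2 h1

/-- The minimal potential repeat blocks of a nonempty word `v` differ only by cyclic
permutation: if `z` and `y` are periodic infinite words of minimal period `p₀ v` in
which `v` occurs, then the repeat block of `y` (its initial block of length `p₀ v`)
is a rotation of the repeat block of `z`. -/
theorem repeat_blocks_rotate
    (v : List Bool) (hv : v ≠ []) (z y : ℕ → Bool)
    (hz : IsPeriodicWord z) (hy : IsPeriodicWord y)
    (hzp : minPeriod z = p0 v) (hyp : minPeriod y = p0 v)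
    (hvz : Occurs v z) (hvy : Occurs v y) :
    ∃ k : ℕ, prefixWord y (p0 v) = (prefixWord z (p0 v)).rotate k := by
  set p := p0 v with hp
  have hzP : IsPeriodicWith z p := hzp ▸ minPeriod_isPeriodicWith hz
  have hyP : IsPeriodicWith y p := hyp ▸ minPeriod_isPeriodicWith hy
  have hp1 : 1 ≤ p := hzP.1
  have hpv : p ≤ v.length := p0_le_length v hv
  obtain ⟨n, hn⟩ := hvz
  obtain ⟨m, hm⟩ := hvy
  have hlenz : (prefixWord z p).length = p := by simp [prefixWord]
  have hleny : (prefixWord y p).length = p := by simp [prefixWord]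
  have key : (prefixWord y p).rotate m = (prefixWord z p).rotate n := by
    apply List.ext_getElem (by simp [prefixWord])
    intro i h1 h2
    rw [List.getElem_rotate, List.getElem_rotate]
    have hi : i < p := by simpa [hleny] using h1
    simp only [prefixWord, List.getElem_map, List.getElem_range, List.length_map,
      List.length_range]
    rw [← periodic_mod hyP, ← periodic_mod hzP]
    have hiv : i < v.length := lt_of_lt_of_le hi hpv
    rw [add_comm i m, add_comm i n, hm i hiv, hn i hiv]
  have hm' : m ≤ p * m := Nat.le_mul_of_pos_left m hp1
  refine ⟨n + (p * m - m), ?_⟩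
  calc prefixWord y p = (prefixWord y p).rotate ((prefixWord y p).length * m) :=
        (List.rotate_length_mul _ _).symm
    _ = (prefixWord y p).rotate (m + (p * m - m)) := by
        rw [hleny, Nat.add_sub_cancel' hm']
    _ = ((prefixWord y p).rotate m).rotate (p * m - m) := by rw [List.rotate_rotate]
    _ = ((prefixWord z p).rotate n).rotate (p * m - m) := by rw [key]
    _ = (prefixWord z p).rotate (n + (p * m - m)) := by rw [List.rotate_rotate]
end

section
/- Let v be a nonempty finite word over {a,b} and let z be a periodic infinite word of minimal period p = p₀(v) in which v occurs. If v occurs in z starting at position n and also starting at position k (i.e. z(n+i) and z(k+i) both equal the i-th letter of v for all i < |v|), then k − n is a multiple of p. -/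
lemma occ_aux (v : List Bool) (hv : v ≠ []) (z : ℕ → Bool)
    (hP : IsPeriodicWith z (p0 v))
    (n k : ℕ) (hnk : n ≤ k) (hn : OccursAt v z n) (hk : OccursAt v z k) :
    p0 v ∣ (k - n) := by
  obtain ⟨hp1, hper⟩ := hP
  set p := p0 v with hp
  set m := k - n with hm
  have hmul : ∀ j t, z (j + t * p) = z j := by
    intro j t
    induction t with
    | zero => simp
    | succ t ih => have := hper (j + t * p); rw [Nat.succ_mul, ← Nat.add_assoc, this, ih]
  set r := m % p with hr
  suffices hr0 : r = 0 by exact Nat.dvd_of_mod_eq_zero hr0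
  by_contra hr0
  have hrp : r < p := Nat.mod_lt _ hp1
  have hocc_r : OccursAt v z (n + r) := by
    intro i hi
    have hk' : k = n + r + (m / p) * p := by
      have h := Nat.div_add_mod m p
      rw [Nat.mul_comm] at h
      omega
    have : z (k + i) = z (n + r + i) := by
      rw [hk']
      have : n + r + m / p * p + i = (n + r + i) + (m / p) * p := by ring
      rw [this, hmul]
    rw [← this]; exact hk i hi
  have hvper : ∀ j, j < v.length → v.getD j false = v.getD (j % r) false := by
    intro j
    induction j using Nat.strong_induction_on with
    | _ j ih =>
      intro hj
      rcases Nat.lt_or_ge j r with h | h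
      · rw [Nat.mod_eq_of_lt h]
      · have hjr : j - r < v.length := by omega
        have e1 : v.getD j false = z (n + j) := (hn j hj).symm
        have e2 : z (n + j) = z (n + r + (j - r)) := by
          congr 1; omega
        have e3 : z (n + r + (j - r)) = v.getD (j - r) false := hocc_r _ hjr
        have e4 : v.getD (j - r) false = v.getD ((j - r) % r) false :=
          ih (j - r) (by omega) hjr
        have e5 : (j - r) % r = j % r := by
          conv_rhs => rw [show j = (j - r) + r by omega]
          rw [Nat.add_mod_right]
        rw [e1, e2, e3, e4, e5]
  set y : ℕ → Bool := fun i => z (n + r + i % r) with hy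
  have hy_per : IsPeriodicWith y r :=
    ⟨Nat.one_le_iff_ne_zero.mpr hr0, fun i => by simp [hy, Nat.add_mod_right]⟩
  have hy_occ : Occurs v y := by
    refine ⟨0, fun i hi => ?_⟩
    have h1 : i % r < v.length := lt_of_le_of_lt (Nat.mod_le i r) hi
    simp only [hy, Nat.zero_add]
    rw [hocc_r _ h1, ← hvper i hi]
  have h1 : minPeriod y ≤ r := Nat.sInf_le hy_per
  have h2 : p ≤ minPeriod y := by
    rw [hp, p0, if_neg hv]
    exact Nat.sInf_le ⟨y, ⟨r, hy_per⟩, hy_occ, rfl⟩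
  omega

/-- If `z` is a periodic infinite word of minimal period `p₀ v` in which the nonempty
word `v` occurs, then any two occurrences of `v` in `z` differ in position by a
multiple of `p₀ v`. -/
theorem occurrences_differ_by_multiple_of_period
    (v : List Bool) (hv : v ≠ []) (z : ℕ → Bool)
    (hz : IsPeriodicWord z) (hzp : minPeriod z = p0 v)
    (n k : ℕ) (hn : OccursAt v z n) (hk : OccursAt v z k) :
    (p0 v : ℤ) ∣ (k : ℤ) - (n : ℤ) := by
  have hP : IsPeriodicWith z (p0 v) := by
    rw [← hzp]
    exact Nat.sInf_mem hz
  rcases le_total n k with h | h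
  · have := occ_aux v hv z hP n k h hn hk
    have : (p0 v : ℤ) ∣ ((k - n : ℕ) : ℤ) := Int.natCast_dvd_natCast.mpr this
    rwa [Nat.cast_sub h] at this
  · have := occ_aux v hv z hP k n h hk hn
    have h2 : (p0 v : ℤ) ∣ ((n - k : ℕ) : ℤ) := Int.natCast_dvd_natCast.mpr this
    rw [Nat.cast_sub h] at h2
    have := dvd_neg.mpr h2
    simpa using this
end

section
/- Let v be a nonempty finite word over {a,b}. Then exactly one letter c ∈ {a,b} satisfies p₀(cv) = p₀(v) (where cv denotes v with the letter c prepended), and the other letter e ∈ {a,b} \\ {c} satisfies p₀(ev) ≥ p₀(v) + 1. -/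
/-!
Deleting the first letter can only lower `p₀`, so `p₀ v ≤ p₀ (c :: v)` for both letters.
If `z` realises `p₀ v = p` with `v` occurring at `n`, then `v` also occurs at `n + p`, and the
letter `z (n + p - 1)` in front of that copy gives a `c` with `p₀ (c :: v) = p₀ v`. Conversely,
since `p₀ v ≤ |v|`, a word of period `p₀ v` containing `c :: v` must have `c = v[p₀ v - 1]`,
so only one letter can keep `p₀` unchanged.
-/

lemma exists_isPeriodicWith_length_occursAt_zero {w : List Bool} (hw : w ≠ []) :
    ∃ z, IsPeriodicWith z w.length ∧ OccursAt w z 0 := by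
  refine ⟨fun i => w.getD (i % w.length) false, ⟨List.length_pos_iff.2 hw, ?_⟩, ?_⟩
  · intro i
    simp [Nat.add_mod_right]
  · intro i hi
    simp [Nat.mod_eq_of_lt hi]

lemma isPeriodicWith_minPeriod {z : ℕ → Bool} (hz : IsPeriodicWord z) :
    IsPeriodicWith z (minPeriod z) :=
  Nat.sInf_mem hz

lemma minPeriod_le {z : ℕ → Bool} {p : ℕ} (hp : IsPeriodicWith z p) : minPeriod z ≤ p :=
  Nat.sInf_le hp

lemma Occurs.of_cons {c : Bool} {v : List Bool} {z : ℕ → Bool} (h : Occurs (c :: v) z) :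
    Occurs v z := by
  obtain ⟨n, hn⟩ := h
  refine ⟨n + 1, fun i hi => ?_⟩
  simpa [Nat.add_assoc, Nat.add_comm 1 i] using hn (i + 1) (by simpa using hi)

lemma OccursAt.cons_of_isPeriodicWith {v : List Bool} {z : ℕ → Bool} {n p : ℕ}
    (hp : IsPeriodicWith z p) (hv : OccursAt v z n) :
    OccursAt (z (n + p - 1) :: v) z (n + p - 1) := by
  intro i hi
  cases i with
  | zero => simp
  | succ j =>
    have hj : j < v.length := by simpa using hi
    rw [show n + p - 1 + (j + 1) = n + j + p by have := hp.1; omega, hp.2, hv j hj]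
    simp

lemma OccursAt.head_eq_getD_of_isPeriodicWith {c : Bool} {v : List Bool} {z : ℕ → Bool}
    {n p : ℕ} (hp : IsPeriodicWith z p) (hpv : p ≤ v.length) (hocc : OccursAt (c :: v) z n) :
    c = v.getD (p - 1) false := by
  obtain ⟨q, rfl⟩ : ∃ q, p = q + 1 := ⟨p - 1, by have := hp.1; omega⟩
  have hc : z n = c := by simpa using hocc 0 (by simp)
  have hshift : z (n + (q + 1)) = v.getD q false := by
    simpa using hocc (q + 1) (by simp; omega)
  rw [← hc, ← hp.2 n, hshift]
  rfl

lemma exists_minPeriod_eq_p0 {w : List Bool} (hw : w ≠ []) :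
    ∃ z, IsPeriodicWord z ∧ Occurs w z ∧ minPeriod z = p0 w := by
  obtain ⟨z, hper, hocc⟩ := exists_isPeriodicWith_length_occursAt_zero hw
  rw [p0, if_neg hw]
  exact Nat.sInf_mem (⟨minPeriod z, z, ⟨_, hper⟩, ⟨0, hocc⟩, rfl⟩ :
    {p | ∃ z, IsPeriodicWord z ∧ Occurs w z ∧ minPeriod z = p}.Nonempty)

lemma p0_le_minPeriod {w : List Bool} (hw : w ≠ []) {z : ℕ → Bool}
    (hz : IsPeriodicWord z) (hocc : Occurs w z) : p0 w ≤ minPeriod z := by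
  rw [p0, if_neg hw]
  exact Nat.sInf_le ⟨z, hz, hocc, rfl⟩

lemma p0_le_length_s7 {w : List Bool} (hw : w ≠ []) : p0 w ≤ w.length := by
  obtain ⟨z, hper, hocc⟩ := exists_isPeriodicWith_length_occursAt_zero hw
  exact (p0_le_minPeriod hw ⟨_, hper⟩ ⟨0, hocc⟩).trans (minPeriod_le hper)

lemma p0_le_p0_cons {v : List Bool} (hv : v ≠ []) (c : Bool) : p0 v ≤ p0 (c :: v) := by
  obtain ⟨z, hz, hocc, hmin⟩ := exists_minPeriod_eq_p0 (List.cons_ne_nil c v)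
  exact hmin ▸ p0_le_minPeriod hv hz hocc.of_cons

lemma exists_p0_cons_eq {v : List Bool} (hv : v ≠ []) : ∃ c, p0 (c :: v) = p0 v := by
  obtain ⟨z, hz, ⟨n, hn⟩, hmin⟩ := exists_minPeriod_eq_p0 hv
  have hocc := hn.cons_of_isPeriodicWith (isPeriodicWith_minPeriod hz)
  refine ⟨_, le_antisymm ?_ (p0_le_p0_cons hv (z (n + minPeriod z - 1)))⟩
  exact hmin ▸ p0_le_minPeriod (List.cons_ne_nil _ v) hz ⟨_, hocc⟩

lemma eq_getD_of_p0_cons_eq {c : Bool} {v : List Bool} (hv : v ≠ [])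
    (h : p0 (c :: v) = p0 v) : c = v.getD (p0 v - 1) false := by
  obtain ⟨z, hz, ⟨n, hocc⟩, hmin⟩ := exists_minPeriod_eq_p0 (List.cons_ne_nil c v)
  have hper : IsPeriodicWith z (p0 v) := h ▸ hmin ▸ isPeriodicWith_minPeriod hz
  exact hocc.head_eq_getD_of_isPeriodicWith hper (p0_le_length_s7 hv)

/-- For a nonempty word `v`, exactly one letter `c` satisfies `p₀ (c :: v) = p₀ v`,
and the other letter `!c` satisfies `p₀ (!c :: v) ≥ p₀ v + 1`. -/
theorem p0_cons_dichotomy (v : List Bool) (hv : v ≠ []) :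
    ∃ c : Bool, p0 (c :: v) = p0 v ∧ p0 v + 1 ≤ p0 ((!c) :: v) := by
  obtain ⟨c, hc⟩ := exists_p0_cons_eq hv
  have hne : p0 ((!c) :: v) ≠ p0 v := fun h =>
    Bool.not_ne_self c ((eq_getD_of_p0_cons_eq hv h).trans (eq_getD_of_p0_cons_eq hv hc).symm)
  exact ⟨c, hc, (p0_le_p0_cons hv _).lt_of_ne hne.symm⟩
end

section
/- Let (X,ρ) be a nonempty compact metric space and let F be a (not necessarily finite) family of continuous self-maps of X which pairwise commute, such that for any x,y ∈ X with x ≠ y there exists U ∈ F with ρ(U(x),U(y)) < ρ(x,y). Then there is exactly one point of X fixed by every member of F. -/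
/-- On a nonempty compact metric space, a commuting family `F` of continuous self-maps
such that any two distinct points are strictly contracted by some member of `F` has
exactly one common fixed point. -/
theorem compact_commuting_contractive_common_fixed_point
    {X : Type*} [MetricSpace X] [CompactSpace X] [Nonempty X]
    (F : Set (X → X))
    (hcont : ∀ U ∈ F, Continuous U)
    (hcomm : ∀ U ∈ F, ∀ V ∈ F, U ∘ V = V ∘ U)
    (hcontr : ∀ x y : X, x ≠ y → ∃ U ∈ F, dist (U x) (U y) < dist x y) :
    ∃! z : X, ∀ U ∈ F, U z = z := by
  -- the collection of nonempty closed invariant sets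
  set S : Set (Set X) := {K | K.Nonempty ∧ IsClosed K ∧ ∀ U ∈ F, Set.MapsTo U K K} with hS
  have huniv : (Set.univ : Set X) ∈ S :=
    ⟨Set.univ_nonempty, isClosed_univ, fun U _ => Set.mapsTo_univ _ _⟩
  -- Zorn: a minimal invariant set K exists
  obtain ⟨K, -, ⟨hKne, hKcl, hKinv⟩, hKmin⟩ :
      ∃ K, K ⊆ Set.univ ∧ Minimal (· ∈ S) K := by
    apply zorn_superset_nonempty S ?_ _ huniv
    intro c hcS hchain hcne
    refine ⟨⋂₀ c, ⟨?_, ?_, ?_⟩, fun s hs => Set.sInter_subset_of_mem hs⟩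
    · have : Nonempty c := hcne.to_subtype
      apply IsCompact.nonempty_sInter_of_directed_nonempty_isCompact_isClosed
      · exact IsChain.directedOn (hchain.symm)
      · exact fun U hU => (hcS hU).1
      · exact fun U hU => (hcS hU).2.1.isCompact
      · exact fun U hU => (hcS hU).2.1
    · exact isClosed_sInter fun U hU => (hcS hU).2.1
    · intro U hU x hx
      exact fun t ht => (hcS ht).2.2 U hU (hx t ht)
  -- every U ∈ F fixes every point of K
  have hfix : ∀ U ∈ F, ∀ x ∈ K, U x = x := by
    intro U hU
    -- the function x ↦ dist x (U x) attains its minimum on K at a fixed point of U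
    have hcompact : IsCompact K := hKcl.isCompact
    obtain ⟨p, hpK, hpmin⟩ :=
      hcompact.exists_isMinOn hKne
        ((continuous_id.dist (hcont U hU)).continuousOn :
          ContinuousOn (fun x => dist x (U x)) K)
    have hpfix : U p = p := by
      by_contra hne
      obtain ⟨V, hV, hlt⟩ := hcontr p (U p) (fun h => hne h.symm)
      have hVU : V (U p) = U (V p) := congrFun (hcomm V hV U hU) p
      rw [hVU] at hlt
      exact absurd (hpmin (hKinv V hV hpK)) (by simpa using not_le.2 hlt)
    -- the fixed set of U inside K is invariant closed nonempty, so equals K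
    have hDS : K ∩ {x | U x = x} ∈ S := by
      refine ⟨⟨p, hpK, hpfix⟩, hKcl.inter (isClosed_eq (hcont U hU) continuous_id), ?_⟩
      intro V hV x hx
      refine ⟨hKinv V hV hx.1, ?_⟩
      have : U (V x) = V (U x) := congrFun (hcomm U hU V hV) x
      simp only [Set.mem_setOf_eq] at hx ⊢
      rw [this, hx.2]
    have hsub : K ⊆ K ∩ {x | U x = x} := hKmin hDS Set.inter_subset_left
    exact fun x hx => (hsub hx).2
  obtain ⟨z, hz⟩ := hKne
  refine ⟨z, fun U hU => hfix U hU z hz, ?_⟩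
  intro w hw
  by_contra hne
  obtain ⟨U, hU, hlt⟩ := hcontr w z hne
  rw [hw U hU, hfix U hU z hz] at hlt
  exact lt_irrefl _ hlt
end

section
/- Let (X,ρ) be a complete metric space, γ ∈ (0,1), and F = {T₁,…,Tₙ} a finite γ-contractive family of continuous self-maps of X. Suppose that for every ε > 0 there exists x ∈ X with ρ(x, T_i(x)) ≤ ε for every i ≤ n. Then F has a common fixed point, i.e. there is y ∈ X with T_i(y) = y for all i ≤ n. -/
/-- If a finite `γ`-contractive family of continuous self-maps of a complete metric
space admits `ε`-approximate common fixed points for every `ε > 0`, then it has a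
common fixed point. -/
theorem approx_common_fixed_points_imply_common_fixed_point
    {X : Type*} [MetricSpace X] [CompleteSpace X]
    (n : ℕ) (T : Fin n → X → X) (hcont : ∀ i, Continuous (T i))
    (γ : ℝ) (hγ0 : 0 < γ) (hγ1 : γ < 1)
    (hcontr : ∀ x y : X, ∃ i, dist (T i x) (T i y) ≤ γ * dist x y)
    (happrox : ∀ ε : ℝ, 0 < ε → ∃ x : X, ∀ i, dist x (T i x) ≤ ε) :
    ∃ y : X, ∀ i, T i y = y := by
  have hcpos : (0:ℝ) < 1 - γ := by linarith
  have key : ∀ (x y : X) (ε δ : ℝ), (∀ i, dist x (T i x) ≤ ε) → (∀ i, dist y (T i y) ≤ δ) →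
      dist x y ≤ (ε + δ) / (1 - γ) := by
    intro x y ε δ hx hy
    obtain ⟨i, hi⟩ := hcontr x y
    have h1 : dist x y ≤ dist x (T i x) + dist (T i x) (T i y) + dist (T i y) y :=
      dist_triangle4 _ _ _ _
    have h2 : dist (T i y) y = dist y (T i y) := dist_comm _ _
    rw [le_div_iff₀ hcpos]
    nlinarith [hx i, hy i]
  choose u hu using fun k : ℕ => happrox (1 / ((k : ℝ) + 1)) (by positivity)
  have hb : ∀ k : ℕ, (0:ℝ) < 1 / ((k : ℝ) + 1) := by intro k; positivity
  have hmono : ∀ N k : ℕ, N ≤ k → 1 / ((k : ℝ) + 1) ≤ 1 / ((N : ℝ) + 1) := by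
    intro N k h
    apply one_div_le_one_div_of_le (by positivity)
    have : (N : ℝ) ≤ (k : ℝ) := Nat.cast_le.mpr h
    linarith
  have hcauchy : CauchySeq u := by
    apply cauchySeq_of_le_tendsto_0 (fun N : ℕ => (2 / ((N : ℝ) + 1)) / (1 - γ))
    · intro m k N hm hk
      calc dist (u m) (u k) ≤ (1 / ((m : ℝ) + 1) + 1 / ((k : ℝ) + 1)) / (1 - γ) :=
            key _ _ _ _ (hu m) (hu k)
        _ ≤ (2 / ((N : ℝ) + 1)) / (1 - γ) := by
            gcongr
            have h1 := hmono N m hm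
            have h2 := hmono N k hk
            have : (2:ℝ) / ((N : ℝ) + 1) = 1 / ((N : ℝ) + 1) + 1 / ((N : ℝ) + 1) := by ring
            linarith
    · have h0 : Filter.Tendsto (fun N : ℕ => 1 / ((N : ℝ) + 1)) Filter.atTop (nhds 0) :=
        tendsto_one_div_add_atTop_nhds_zero_nat
      have := (h0.const_mul (2 / (1 - γ)))
      simp only [mul_zero] at this
      convert this using 2 with N
      field_simp
  obtain ⟨y, hy⟩ := cauchySeq_tendsto_of_complete hcauchy
  refine ⟨y, fun i => ?_⟩
  have h1 : Filter.Tendsto (fun k => dist (u k) (T i (u k))) Filter.atTop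
      (nhds (dist y (T i y))) :=
    (continuous_dist.comp (continuous_id.prodMk (hcont i))).continuousAt.tendsto.comp hy
  have h2 : dist y (T i y) ≤ 0 := by
    refine le_of_tendsto_of_tendsto' h1 tendsto_one_div_add_atTop_nhds_zero_nat ?_
    intro k; exact hu k i
  have := dist_le_zero.mp h2
  exact this.symm
end

section
/- Let (X,ρ) be a metric space, γ ∈ (0,1), and F = {T₁,…,Tₙ} a finite γ-contractive family of self-maps of X. If (x_m)_{m≥0} is a sequence in X such that ρ(x_m, T_i(x_m)) ≤ 2^{−m} for every m ≥ 0 and every i ≤ n, then (x_m) is a Cauchy sequence; indeed ρ(x_p, x_q) ≤ 2^{−(q−1)}/(1−γ) whenever p > q ≥ 0. -/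
/-- If `F = {T₁, …, Tₙ}` is a finite `γ`-contractive family on a metric space and
`(x_m)` is a sequence with `dist x_m (T i x_m) ≤ 2⁻ᵐ` for all `m` and `i`, then
`(x_m)` is Cauchy; indeed `dist x_p x_q ≤ 2^{-(q-1)} / (1 - γ)` whenever `p > q`. -/
theorem approx_fixed_point_sequence_cauchy
    {X : Type*} [MetricSpace X]
    (n : ℕ) (T : Fin n → X → X) (hcont : ∀ i, Continuous (T i))
    (γ : ℝ) (hγ0 : 0 < γ) (hγ1 : γ < 1)
    (hcontr : ∀ x y : X, ∃ i, dist (T i x) (T i y) ≤ γ * dist x y)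
    (x : ℕ → X) (hx : ∀ m : ℕ, ∀ i, dist (x m) (T i (x m)) ≤ (2 : ℝ) ^ (-(m : ℤ))) :
    CauchySeq x ∧
      ∀ p q : ℕ, q < p →
        dist (x p) (x q) ≤ (2 : ℝ) ^ (-((q : ℤ) - 1)) / (1 - γ) := by
  have h1γ : (0:ℝ) < 1 - γ := by linarith
  have hdouble : ∀ q : ℕ, (2:ℝ) ^ (-((q:ℤ) - 1)) = 2 * (2:ℝ) ^ (-(q:ℤ)) := by
    intro q
    have h : -((q:ℤ) - 1) = 1 + -(q:ℤ) := by ring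
    rw [h, zpow_add₀ (by norm_num : (2:ℝ) ≠ 0), zpow_one]
  have hd : ∀ p q : ℕ, q < p →
      dist (x p) (x q) ≤ (2 : ℝ) ^ (-((q : ℤ) - 1)) / (1 - γ) := by
    intro p q hpq
    obtain ⟨i, hi⟩ := hcontr (x p) (x q)
    have htri : dist (x p) (x q) ≤
        dist (x p) (T i (x p)) + dist (T i (x p)) (T i (x q)) + dist (T i (x q)) (x q) :=
      dist_triangle4 _ _ _ _
    have h1 := hx p i
    have h2' : dist (T i (x q)) (x q) ≤ (2:ℝ) ^ (-(q:ℤ)) := by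
      rw [dist_comm]; exact hx q i
    have hpq' : (2:ℝ) ^ (-(p:ℤ)) ≤ (2:ℝ) ^ (-(q:ℤ)) := by
      apply zpow_le_zpow_right₀ (by norm_num)
      omega
    rw [le_div_iff₀ h1γ, hdouble]
    nlinarith [dist_nonneg (x := x p) (y := x q)]
  refine ⟨?_, hd⟩
  have hmono : ∀ a N : ℕ, N ≤ a →
      (2:ℝ) ^ (-((a:ℤ) - 1)) ≤ (2:ℝ) ^ (-((N:ℤ) - 1)) := by
    intro a N hNa
    apply zpow_le_zpow_right₀ (by norm_num)
    omega
  refine cauchySeq_of_le_tendsto_0 (fun N => (2:ℝ) ^ (-((N:ℤ) - 1)) / (1 - γ)) ?_ ?_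
  · intro a b N ha hb
    rcases lt_trichotomy a b with h | h | h
    · calc dist (x a) (x b) = dist (x b) (x a) := dist_comm _ _
        _ ≤ (2:ℝ) ^ (-((a:ℤ) - 1)) / (1 - γ) := hd b a h
        _ ≤ (2:ℝ) ^ (-((N:ℤ) - 1)) / (1 - γ) := by
            gcongr <;> first | norm_num | omega
    · simp only [h, dist_self]
      positivity
    · calc dist (x a) (x b) ≤ (2:ℝ) ^ (-((b:ℤ) - 1)) / (1 - γ) := hd a b h
        _ ≤ (2:ℝ) ^ (-((N:ℤ) - 1)) / (1 - γ) := by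
            gcongr <;> first | norm_num | omega
  · have h0 : Filter.Tendsto (fun N : ℕ => ((1:ℝ)/2)^N) Filter.atTop (nhds 0) :=
      tendsto_pow_atTop_nhds_zero_of_lt_one (by norm_num) (by norm_num)
    have := (h0.const_mul (2:ℝ)).div_const (1 - γ)
    simp only [mul_zero, zero_div] at this
    convert this using 2 with N
    rw [hdouble N]
    congr 1
    rw [one_div, inv_pow, ← zpow_natCast, ← zpow_neg]
end

section
/- Let (X,ρ) be a nonempty complete metric space, γ ∈ (0,1), and let S,T be continuous self-maps of X which commute (S ∘ T = T ∘ S) and such that {S,T} is γ-contractive. Then at least one of the following holds: (1) there exists x ∈ X such that the orbit sequence (T^i(x))_{i≥0} is a Cauchy sequence; or (2) for every ε > 0 there exists x ∈ X with ρ(x, S(x)) < ε and ρ(x, T(x)) < ε. -/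
/-- Dichotomy for a commuting `γ`-contractive pair `{S, T}` of continuous self-maps of
a nonempty complete metric space: either some `T`-orbit is a Cauchy sequence, or there
are `ε`-approximate common fixed points for every `ε > 0` (possibly both). -/
theorem commuting_pair_dichotomy
    {X : Type*} [MetricSpace X] [CompleteSpace X] [Nonempty X]
    (γ : ℝ) (hγ0 : 0 < γ) (hγ1 : γ < 1)
    (S T : X → X) (hS : Continuous S) (hT : Continuous T)
    (hcomm : S ∘ T = T ∘ S)
    (hcontr : ∀ x y : X,
      dist (S x) (S y) ≤ γ * dist x y ∨ dist (T x) (T y) ≤ γ * dist x y) :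
    (∃ x : X, CauchySeq (fun i : ℕ => T^[i] x)) ∨
      (∀ ε : ℝ, 0 < ε → ∃ x : X, dist x (S x) < ε ∧ dist x (T x) < ε) := by
  classical
  by_cases h1 : ∃ x : X, CauchySeq (fun i : ℕ => T^[i] x)
  · exact Or.inl h1
  push_neg at h1
  refine Or.inr ?_
  intro ε hε
  by_contra hbad
  have hγ' : (0:ℝ) < 1 - γ := by linarith
  have hST : ∀ x : X, S (T x) = T (S x) := fun x => congrFun hcomm x
  have hg : ∀ x : X, dist x (T x) < ε → ε ≤ dist x (S x) := by
    intro x hx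
    by_contra h
    push_neg at h
    exact hbad ⟨x, h, hx⟩
  set η : ℝ := ε * (1 - γ) / 100 with hη_def
  have hη : 0 < η := by rw [hη_def]; exact div_pos (mul_pos hε hγ') (by norm_num)
  set δ : ℝ := η * (1 - γ) with hδ_def
  have hδ : 0 < δ := by rw [hδ_def]; exact mul_pos hη hγ'
  have hηε : η ≤ ε / 100 := by
    rw [hη_def]
    nlinarith [mul_nonneg hε.le hγ0.le]
  have hδη : δ ≤ η := by
    rw [hδ_def]
    nlinarith [mul_nonneg hη.le hγ0.le]
  have hδε : δ < ε := by linarith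
  -- Break lemma: along any pure T-run, T must eventually fail to contract the pair
  -- of consecutive orbit points (else the orbit is Cauchy); at the first failure, S contracts.
  have hbreak : ∀ z : X, ∃ k : ℕ,
      (∀ j, j ≤ k → dist (T^[j] z) (T^[j+1] z) ≤ γ ^ j * dist z (T z)) ∧
      dist (S (T^[k] z)) (S (T^[k+1] z)) ≤ γ * dist (T^[k] z) (T^[k+1] z) := by
    intro z
    by_cases hall : ∀ k : ℕ, dist (T^[k+1] z) (T^[k+1+1] z) ≤ γ * dist (T^[k] z) (T^[k+1] z)
    · exfalso
      apply h1 z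
      have hgeo : ∀ n : ℕ, dist (T^[n] z) (T^[n+1] z) ≤ dist z (T z) * γ ^ n := by
        intro n
        induction n with
        | zero => simp
        | succ n ih =>
          calc dist (T^[n+1] z) (T^[n+1+1] z) ≤ γ * dist (T^[n] z) (T^[n+1] z) := hall n
            _ ≤ γ * (dist z (T z) * γ ^ n) := mul_le_mul_of_nonneg_left ih hγ0.le
            _ = dist z (T z) * γ ^ (n+1) := by ring
      exact cauchySeq_of_le_geometric γ (dist z (T z)) hγ1 hgeo
    · push_neg at hall
      refine ⟨Nat.find hall, ?_, ?_⟩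
      · intro j
        induction j with
        | zero => intro _; simp
        | succ j ih =>
          intro hj
          have hjk : j < Nat.find hall := Nat.lt_of_succ_le hj
          have hle : dist (T^[j+1] z) (T^[j+1+1] z) ≤ γ * dist (T^[j] z) (T^[j+1] z) :=
            not_lt.mp (Nat.find_min hall hjk)
          calc dist (T^[j+1] z) (T^[j+1+1] z) ≤ γ * dist (T^[j] z) (T^[j+1] z) := hle
            _ ≤ γ * (γ ^ j * dist z (T z)) := mul_le_mul_of_nonneg_left (ih hjk.le) hγ0.le
            _ = γ ^ (j+1) * dist z (T z) := by ring
      · have hPk := Nat.find_spec hall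
        rcases hcontr (T^[Nat.find hall] z) (T^[Nat.find hall + 1] z) with h | h
        · exact h
        · exfalso
          rw [← Function.iterate_succ_apply' T (Nat.find hall) z,
              ← Function.iterate_succ_apply' T (Nat.find hall + 1) z] at h
          exact absurd h (not_le.mpr hPk)
  choose K hK1 hK2 using hbreak
  -- a starting point with small T-displacement
  have hstep : ∀ x : X, ∃ y : X, dist y (T y) ≤ γ * dist x (T x) := by
    intro x
    rcases hcontr x (T x) with h | h
    · refine ⟨S x, ?_⟩
      rw [← hST x]
      exact h
    · exact ⟨T x, h⟩
  have hstart : ∃ z : X, dist z (T z) ≤ δ := by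
    obtain ⟨x₀⟩ := (inferInstance : Nonempty X)
    have hiter : ∀ n : ℕ, ∃ y : X, dist y (T y) ≤ γ ^ n * dist x₀ (T x₀) := by
      intro n
      induction n with
      | zero => exact ⟨x₀, by simp⟩
      | succ n ih =>
        obtain ⟨y, hy⟩ := ih
        obtain ⟨y', hy'⟩ := hstep y
        refine ⟨y', hy'.trans ?_⟩
        calc γ * dist y (T y) ≤ γ * (γ ^ n * dist x₀ (T x₀)) :=
              mul_le_mul_of_nonneg_left hy hγ0.le
          _ = γ ^ (n+1) * dist x₀ (T x₀) := by ring
    obtain ⟨n, hn⟩ := exists_pow_lt_of_lt_one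
      (show (0:ℝ) < δ / (dist x₀ (T x₀) + 1) from div_pos hδ (by positivity)) hγ1
    obtain ⟨y, hy⟩ := hiter n
    refine ⟨y, hy.trans ?_⟩
    have hd0 : (0:ℝ) ≤ dist x₀ (T x₀) := dist_nonneg
    have h1' : γ ^ n * (dist x₀ (T x₀) + 1) < δ := (lt_div_iff₀ (by positivity)).mp hn
    nlinarith [pow_nonneg hγ0.le n]
  obtain ⟨z₀, hz₀⟩ := hstart
  -- the run
  set st : X → X := fun z => S (T^[K z] z) with hst_def
  set Y : ℕ → X := fun m => st^[m] z₀ with hY_def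
  have hY0 : Y 0 = z₀ := by simp [hY_def]
  have hYsucc : ∀ m : ℕ, Y (m+1) = S (T^[K (Y m)] (Y m)) := by
    intro m
    simp only [hY_def, hst_def, Function.iterate_succ_apply']
  -- T-displacement stays ≤ δ along the run
  have hfY : ∀ m : ℕ, dist (Y m) (T (Y m)) ≤ δ := by
    intro m
    induction m with
    | zero => rw [hY0]; exact hz₀
    | succ m ih =>
      have hY1 := hYsucc m
      rw [hY1]
      have e1 : T (S (T^[K (Y m)] (Y m))) = S (T^[K (Y m) + 1] (Y m)) := by
        rw [← hST (T^[K (Y m)] (Y m))]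
        rw [Function.iterate_succ_apply' T (K (Y m)) (Y m)]
      rw [e1]
      have htop : dist (T^[K (Y m)] (Y m)) (T^[K (Y m) + 1] (Y m)) ≤
          γ ^ (K (Y m)) * dist (Y m) (T (Y m)) := hK1 (Y m) (K (Y m)) le_rfl
      have hpow1 : γ ^ (K (Y m)) ≤ 1 := pow_le_one₀ hγ0.le hγ1.le
      have hb : dist (T^[K (Y m)] (Y m)) (T^[K (Y m) + 1] (Y m)) ≤ δ := by
        have h1' : γ ^ (K (Y m)) * dist (Y m) (T (Y m)) ≤ 1 * δ :=
          mul_le_mul hpow1 ih dist_nonneg zero_le_one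
        rw [one_mul] at h1'
        linarith
      calc dist (S (T^[K (Y m)] (Y m))) (S (T^[K (Y m) + 1] (Y m)))
          ≤ γ * dist (T^[K (Y m)] (Y m)) (T^[K (Y m) + 1] (Y m)) := hK2 (Y m)
        _ ≤ γ * δ := mul_le_mul_of_nonneg_left hb hγ0.le
        _ ≤ δ := by nlinarith [mul_pos hδ hγ']
  -- T-displacement of break points is ≤ δ
  have hbAll : ∀ m : ℕ, dist (T^[K (Y m)] (Y m)) (T^[K (Y m) + 1] (Y m)) ≤ δ := by
    intro m
    have htop := hK1 (Y m) (K (Y m)) le_rfl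
    have hpow1 : γ ^ (K (Y m)) ≤ 1 := pow_le_one₀ hγ0.le hγ1.le
    have h1' : γ ^ (K (Y m)) * dist (Y m) (T (Y m)) ≤ 1 * δ :=
      mul_le_mul hpow1 (hfY m) dist_nonneg zero_le_one
    rw [one_mul] at h1'
    linarith
  have hfB : ∀ m : ℕ, dist (T^[K (Y m)] (Y m)) (T (T^[K (Y m)] (Y m))) ≤ δ := by
    intro m
    rw [← Function.iterate_succ_apply' T (K (Y m)) (Y m)]
    exact hbAll m
  -- distance from Y m to its break point is ≤ η
  have hchain : ∀ z : X, ∀ n : ℕ, n ≤ K z →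
      (1 - γ) * dist z (T^[n] z) ≤ (1 - γ ^ n) * dist z (T z) := by
    intro z n
    induction n with
    | zero => intro _; simp
    | succ n ih =>
      intro hn
      have hn' : n ≤ K z := Nat.le_of_succ_le hn
      have h1' := ih hn'
      have h2' := hK1 z n hn'
      have h3' : dist z (T^[n+1] z) ≤ dist z (T^[n] z) + dist (T^[n] z) (T^[n+1] z) :=
        dist_triangle _ _ _
      have h4' : (1-γ) * dist (T^[n] z) (T^[n+1] z) ≤ (1-γ) * (γ ^ n * dist z (T z)) :=
        mul_le_mul_of_nonneg_left h2' hγ'.le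
      have h5' : (1-γ) * dist z (T^[n+1] z) ≤
          (1-γ) * (dist z (T^[n] z) + dist (T^[n] z) (T^[n+1] z)) :=
        mul_le_mul_of_nonneg_left h3' hγ'.le
      rw [pow_succ]
      nlinarith [h1', h4', h5']
  have hYBd : ∀ m : ℕ, dist (Y m) (T^[K (Y m)] (Y m)) ≤ η := by
    intro m
    have h1' := hchain (Y m) (K (Y m)) le_rfl
    have hd0 : (0:ℝ) ≤ dist (Y m) (T (Y m)) := dist_nonneg
    have hpow0 : (0:ℝ) ≤ γ ^ (K (Y m)) := pow_nonneg hγ0.le _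
    have h2' : (1 - γ ^ (K (Y m))) * dist (Y m) (T (Y m)) ≤ dist (Y m) (T (Y m)) := by
      nlinarith [mul_nonneg hpow0 hd0]
    have hδ' : δ = (1 - γ) * η := by rw [hδ_def]; ring
    have h3' : (1-γ) * dist (Y m) (T^[K (Y m)] (Y m)) ≤ (1-γ) * η := by
      have := hfY m
      linarith [h1', h2']
    exact le_of_mul_le_mul_left h3' hγ'
  -- break points have big S-displacement
  have hgB : ∀ m : ℕ, ε ≤ dist (T^[K (Y m)] (Y m)) (S (T^[K (Y m)] (Y m))) := by
    intro m
    apply hg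
    calc dist (T^[K (Y m)] (Y m)) (T (T^[K (Y m)] (Y m))) ≤ δ := hfB m
      _ < ε := hδε
  -- consecutive break points are far apart
  have hDlb : ∀ m : ℕ,
      ε - η ≤ dist (T^[K (Y m)] (Y m)) (T^[K (Y (m+1))] (Y (m+1))) := by
    intro m
    have h1' := hgB m
    have h2' : dist (T^[K (Y (m+1))] (Y (m+1))) (S (T^[K (Y m)] (Y m))) ≤ η := by
      rw [← hYsucc m, dist_comm]
      exact hYBd (m+1)
    have h3' := dist_triangle (T^[K (Y m)] (Y m)) (T^[K (Y (m+1))] (Y (m+1)))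
      (S (T^[K (Y m)] (Y m)))
    linarith
  -- the key recursion
  have hDrec : ∀ m : ℕ,
      dist (T^[K (Y (m+1))] (Y (m+1))) (T^[K (Y (m+1+1))] (Y (m+1+1))) ≤
        γ * dist (T^[K (Y m)] (Y m)) (T^[K (Y (m+1))] (Y (m+1))) + 2 * η := by
    intro m
    rcases hcontr (T^[K (Y m)] (Y m)) (T^[K (Y (m+1))] (Y (m+1))) with h | h
    · -- S contracts the pair of break points
      have e1 : S (T^[K (Y m)] (Y m)) = Y (m+1) := (hYsucc m).symm
      have e2 : S (T^[K (Y (m+1))] (Y (m+1))) = Y (m+1+1) := (hYsucc (m+1)).symm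
      rw [e1, e2] at h
      have t1 := dist_triangle4 (T^[K (Y (m+1))] (Y (m+1))) (Y (m+1)) (Y (m+1+1))
        (T^[K (Y (m+1+1))] (Y (m+1+1)))
      have a1 : dist (T^[K (Y (m+1))] (Y (m+1))) (Y (m+1)) ≤ η := by
        rw [dist_comm]; exact hYBd (m+1)
      have a2 : dist (Y (m+1+1)) (T^[K (Y (m+1+1))] (Y (m+1+1))) ≤ η := hYBd (m+1+1)
      linarith
    · -- T contracting the pair is impossible: the pair is long but both
      -- endpoints have small T-displacement
      exfalso
      have hb1 := hfB m
      have hb2 := hfB (m+1)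
      have t1 := dist_triangle4 (T^[K (Y m)] (Y m)) (T (T^[K (Y m)] (Y m)))
        (T (T^[K (Y (m+1))] (Y (m+1)))) (T^[K (Y (m+1))] (Y (m+1)))
      have h2b : dist (T (T^[K (Y (m+1))] (Y (m+1)))) (T^[K (Y (m+1))] (Y (m+1))) ≤ δ := by
        rw [dist_comm]; exact hb2
      have hd := hDlb m
      have hD1 : (1-γ) * dist (T^[K (Y m)] (Y m)) (T^[K (Y (m+1))] (Y (m+1))) ≤ 2*δ := by
        nlinarith [h, hb1, h2b, t1]
      rw [hδ_def] at hD1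
      nlinarith [mul_le_mul_of_nonneg_left hd hγ'.le, hD1, hηε, hε, hη]
  -- unrolling the recursion
  have hDun : ∀ m : ℕ,
      dist (T^[K (Y m)] (Y m)) (T^[K (Y (m+1))] (Y (m+1))) ≤
        γ ^ m * dist (T^[K (Y 0)] (Y 0)) (T^[K (Y 1)] (Y 1)) + 2 * η / (1 - γ) := by
    intro m
    induction m with
    | zero =>
      have : (0:ℝ) ≤ 2 * η / (1 - γ) := by positivity
      simp only [pow_zero, one_mul]
      linarith
    | succ m ih =>
      have hrec := hDrec m
      have hmul := mul_le_mul_of_nonneg_left ih hγ0.le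
      have hexp : γ * (γ ^ m * dist (T^[K (Y 0)] (Y 0)) (T^[K (Y 1)] (Y 1)) +
            2 * η / (1 - γ)) + 2 * η =
          γ ^ (m+1) * dist (T^[K (Y 0)] (Y 0)) (T^[K (Y 1)] (Y 1)) + 2 * η / (1 - γ) := by
        field_simp
        ring
      linarith
  -- final contradiction
  have hD0 : (0:ℝ) ≤ dist (T^[K (Y 0)] (Y 0)) (T^[K (Y 1)] (Y 1)) := dist_nonneg
  obtain ⟨m, hm⟩ := exists_pow_lt_of_lt_one
    (show (0:ℝ) < (ε/2) / (dist (T^[K (Y 0)] (Y 0)) (T^[K (Y 1)] (Y 1)) + 1) from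
      div_pos (by linarith) (by positivity)) hγ1
  have hsm : γ ^ m * (dist (T^[K (Y 0)] (Y 0)) (T^[K (Y 1)] (Y 1)) + 1) < ε/2 :=
    (lt_div_iff₀ (by positivity)).mp hm
  have h1'' := hDlb m
  have h2'' := hDun m
  have h50 : 2 * η / (1 - γ) = ε / 50 := by
    rw [hη_def]
    field_simp
    ring
  rw [h50] at h2''
  nlinarith [pow_nonneg hγ0.le m, hηε, hε, hsm, h1'', h2'']
end

section
/- Let (X,ρ) be a nonempty complete metric space, γ ∈ (0,1), and let S,T be continuous self-maps of X which commute (S ∘ T = T ∘ S) and such that {S,T} is γ-contractive. Then there is exactly one point y ∈ X with S(y) = y and T(y) = y. -/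
open Filter Topology

/-- A commuting `γ`-contractive pair `{S, T}` of continuous self-maps of a nonempty
complete metric space has exactly one common fixed point. -/
theorem commuting_pair_common_fixed_point
    {X : Type*} [MetricSpace X] [CompleteSpace X] [Nonempty X]
    (γ : ℝ) (hγ0 : 0 < γ) (hγ1 : γ < 1)
    (S T : X → X) (hS : Continuous S) (hT : Continuous T)
    (hcomm : S ∘ T = T ∘ S)
    (hcontr : ∀ x y : X,
      dist (S x) (S y) ≤ γ * dist x y ∨ dist (T x) (T y) ≤ γ * dist x y) :
    ∃! y : X, S y = y ∧ T y = y := by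
  classical
  have hcomm' : ∀ z : X, S (T z) = T (S z) := fun z => congrFun hcomm z
  -- the step map: apply whichever of S, T contracts the pair (S z, T z)
  set f : X → X := fun z =>
    if dist (S (S z)) (S (T z)) ≤ γ * dist (S z) (T z) then S z else T z with hf
  have hfz : ∀ z : X, f z =
      if dist (S (S z)) (S (T z)) ≤ γ * dist (S z) (T z) then S z else T z :=
    fun z => rfl
  -- one-step contraction of c(z) = dist (S z) (T z)
  have hstep_c : ∀ z : X, dist (S (f z)) (T (f z)) ≤ γ * dist (S z) (T z) := by
    intro z
    by_cases h : dist (S (S z)) (S (T z)) ≤ γ * dist (S z) (T z)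
    · rw [hfz z, if_pos h, ← hcomm' z]
      exact h
    · rw [hfz z, if_neg h, hcomm' z]
      exact (hcontr (S z) (T z)).resolve_left h
  -- one-step estimate for m(z) = max (dist z (S z)) (dist z (T z))
  have hstep_m : ∀ z : X,
      max (dist (f z) (S (f z))) (dist (f z) (T (f z))) ≤
        γ * max (dist z (S z)) (dist z (T z)) + 3 * dist (S z) (T z) := by
    intro z
    have hc' := hstep_c z
    have hcnn : (0 : ℝ) ≤ dist (S z) (T z) := dist_nonneg
    have hγle : γ ≤ 1 := hγ1.le
    have hγc : γ * dist (S z) (T z) ≤ dist (S z) (T z) :=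
      mul_le_of_le_one_left hcnn hγle
    by_cases h : dist (S (S z)) (S (T z)) ≤ γ * dist (S z) (T z)
    · -- f z = S z
      rw [hfz z, if_pos h] at hc' ⊢
      have hmax1 : γ * dist z (S z) ≤ γ * max (dist z (S z)) (dist z (T z)) :=
        mul_le_mul_of_nonneg_left (le_max_left _ _) hγ0.le
      have ha' : dist (S z) (S (S z)) ≤
          γ * dist z (S z) + dist (S z) (T z) + dist (S (S z)) (T (S z)) := by
        rcases hcontr z (S z) with h1 | h1
        · have n2 : (0 : ℝ) ≤ dist (S (S z)) (T (S z)) := dist_nonneg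
          linarith
        · have h4 := dist_triangle4 (S z) (T z) (T (S z)) (S (S z))
          rw [dist_comm (T (S z)) (S (S z))] at h4
          linarith
      have hb' : dist (S z) (T (S z)) ≤
          dist (S z) (S (S z)) + dist (S (S z)) (T (S z)) := dist_triangle _ _ _
      apply max_le
      · linarith
      · linarith
    · -- f z = T z
      rw [hfz z, if_neg h] at hc' ⊢
      have hmax1 : γ * dist z (T z) ≤ γ * max (dist z (S z)) (dist z (T z)) :=
        mul_le_mul_of_nonneg_left (le_max_right _ _) hγ0.le
      have hb' : dist (T z) (T (T z)) ≤
          γ * dist z (T z) + dist (S z) (T z) + dist (S (T z)) (T (T z)) := by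
        rcases hcontr z (T z) with h1 | h1
        · have h4 := dist_triangle4 (T z) (S z) (S (T z)) (T (T z))
          rw [dist_comm (T z) (S z)] at h4
          linarith
        · have n2 : (0 : ℝ) ≤ dist (S (T z)) (T (T z)) := dist_nonneg
          linarith
      have ha' : dist (T z) (S (T z)) ≤
          dist (T z) (T (T z)) + dist (S (T z)) (T (T z)) := by
        have := dist_triangle (T z) (T (T z)) (S (T z))
        rw [dist_comm (T (T z)) (S (T z))] at this
        exact this
      apply max_le
      · linarith
      · linarith
  -- the step moves by at most m(z)
  have hstep_d : ∀ z : X, dist z (f z) ≤ max (dist z (S z)) (dist z (T z)) := by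
    intro z
    rw [hfz z]
    split_ifs
    · exact le_max_left _ _
    · exact le_max_right _ _
  -- the orbit
  obtain ⟨x₀⟩ := ‹Nonempty X›
  set y : ℕ → X := fun n => f^[n] x₀ with hy'
  have hy : ∀ n, y (n + 1) = f (y n) := fun n => Function.iterate_succ_apply' f n x₀
  set C₀ : ℝ := dist (S (y 0)) (T (y 0)) with hC₀
  set M₀ : ℝ := max (dist (y 0) (S (y 0))) (dist (y 0) (T (y 0))) with hM₀
  set K : ℝ := 3 * C₀ / γ with hK
  have hC₀nn : 0 ≤ C₀ := dist_nonneg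
  have hM₀nn : 0 ≤ M₀ := le_trans dist_nonneg (le_max_left _ _)
  -- geometric decay of c along the orbit
  have hcgeo : ∀ n, dist (S (y n)) (T (y n)) ≤ γ ^ n * C₀ := by
    intro n
    induction n with
    | zero => simp [hC₀]
    | succ n ih =>
      rw [hy n]
      calc dist (S (f (y n))) (T (f (y n))) ≤ γ * dist (S (y n)) (T (y n)) := hstep_c (y n)
        _ ≤ γ * (γ ^ n * C₀) := mul_le_mul_of_nonneg_left ih hγ0.le
        _ = γ ^ (n + 1) * C₀ := by ring
  -- bound for m along the orbit
  have hmbd : ∀ n, max (dist (y n) (S (y n))) (dist (y n) (T (y n))) ≤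
      γ ^ n * M₀ + (n : ℝ) * γ ^ n * K := by
    intro n
    induction n with
    | zero => simp [hM₀]
    | succ n ih =>
      have h1 : max (dist (y (n + 1)) (S (y (n + 1)))) (dist (y (n + 1)) (T (y (n + 1)))) ≤
          γ * max (dist (y n) (S (y n))) (dist (y n) (T (y n)))
            + 3 * dist (S (y n)) (T (y n)) := by
        rw [hy n]; exact hstep_m (y n)
      have h2 : γ * max (dist (y n) (S (y n))) (dist (y n) (T (y n)))
            ≤ γ * (γ ^ n * M₀ + (n : ℝ) * γ ^ n * K) :=
        mul_le_mul_of_nonneg_left ih hγ0.le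
      have h3 : 3 * dist (S (y n)) (T (y n)) ≤ 3 * (γ ^ n * C₀) := by
        have := hcgeo n; linarith
      have key : γ * (γ ^ n * M₀ + (n : ℝ) * γ ^ n * K) + 3 * (γ ^ n * C₀)
          = γ ^ (n + 1) * M₀ + ((n : ℝ) + 1) * γ ^ (n + 1) * K := by
        rw [hK]
        field_simp
        ring
      push_cast
      linarith
  -- summability of the dominating sequence
  have hsum : Summable (fun n : ℕ => γ ^ n * M₀ + (n : ℝ) * γ ^ n * K) := by
    have h1 : Summable (fun n : ℕ => γ ^ n * M₀) :=
      (summable_geometric_of_lt_one hγ0.le hγ1).mul_right M₀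
    have h2 : Summable (fun n : ℕ => (n : ℝ) * γ ^ n * K) := by
      have hnorm : ‖γ‖ < 1 := by
        rw [Real.norm_eq_abs, abs_of_pos hγ0]; exact hγ1
      have h3 : Summable (fun n : ℕ => (n : ℝ) ^ 1 * γ ^ n) :=
        summable_pow_mul_geometric_of_norm_lt_one 1 hnorm
      have h4 : Summable (fun n : ℕ => (n : ℝ) * γ ^ n) := by
        refine h3.congr fun n => ?_
        simp
      exact h4.mul_right K
    exact h1.add h2
  -- the orbit is Cauchy
  have hdistle : ∀ n : ℕ, dist (y n) (y (n + 1)) ≤ γ ^ n * M₀ + (n : ℝ) * γ ^ n * K := by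
    intro n
    rw [hy n]
    exact le_trans (hstep_d (y n)) (hmbd n)
  have hcauchy : CauchySeq y := by
    apply cauchySeq_of_summable_dist
    refine Summable.of_nonneg_of_le (fun n => dist_nonneg) (fun n => ?_) hsum
    exact hdistle n
  obtain ⟨w, hw⟩ := cauchySeq_tendsto_of_complete hcauchy
  -- the dominating sequence tends to zero
  have hB0 : Tendsto (fun n : ℕ => γ ^ n * M₀ + (n : ℝ) * γ ^ n * K) atTop (𝓝 0) :=
    hsum.tendsto_atTop_zero
  -- limit is a fixed point of S
  have hSw : S w = w := by
    have hlim1 : Tendsto (fun n => dist (y n) (S (y n))) atTop (𝓝 (dist w (S w))) :=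
      hw.dist ((hS.tendsto w).comp hw)
    have hlim2 : Tendsto (fun n => dist (y n) (S (y n))) atTop (𝓝 0) := by
      refine squeeze_zero (fun n => dist_nonneg) (fun n => ?_) hB0
      exact le_trans (le_max_left _ _) (hmbd n)
    have h0 : dist w (S w) = 0 := tendsto_nhds_unique hlim1 hlim2
    exact (dist_eq_zero.mp h0).symm
  -- limit is a fixed point of T
  have hTw : T w = w := by
    have hlim1 : Tendsto (fun n => dist (y n) (T (y n))) atTop (𝓝 (dist w (T w))) :=
      hw.dist ((hT.tendsto w).comp hw)
    have hlim2 : Tendsto (fun n => dist (y n) (T (y n))) atTop (𝓝 0) := by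
      refine squeeze_zero (fun n => dist_nonneg) (fun n => ?_) hB0
      exact le_trans (le_max_right _ _) (hmbd n)
    have h0 : dist w (T w) = 0 := tendsto_nhds_unique hlim1 hlim2
    exact (dist_eq_zero.mp h0).symm
  refine ⟨w, ⟨hSw, hTw⟩, ?_⟩
  rintro z ⟨hz1, hz2⟩
  have hd : dist z w ≤ γ * dist z w := by
    rcases hcontr z w with h | h
    · rwa [hz1, hSw] at h
    · rwa [hz2, hTw] at h
  have h0 : dist z w = 0 := by
    nlinarith [dist_nonneg (x := z) (y := w)]
  exact dist_eq_zero.mp h0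
end

section
/- Let (X,ρ) be a nonempty bounded metric space, γ ∈ (0,1), and let F = {T₁,…,Tₙ} be a finite γ-contractive family of uniformly continuous self-maps of X which pairwise commute. Then for every ε > 0 there exists x ∈ X with ρ(x, T_i(x)) < ε for every i ≤ n. -/
private def afpApp {X : Type*} {n : ℕ} (T : Fin n → X → X) (w : List (Fin n)) (x : X) : X :=
  w.foldl (fun x i => T i x) x

private lemma afpApp_nil {X : Type*} {n : ℕ} (T : Fin n → X → X) (x : X) :
    afpApp T [] x = x := rfl

private lemma afpApp_cons {X : Type*} {n : ℕ} (T : Fin n → X → X) (i : Fin n)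
    (w : List (Fin n)) (x : X) : afpApp T (i :: w) x = afpApp T w (T i x) := rfl

private lemma afpApp_append {X : Type*} {n : ℕ} (T : Fin n → X → X) (w v : List (Fin n)) (x : X) :
    afpApp T (w ++ v) x = afpApp T v (afpApp T w x) := by
  induction w generalizing x with
  | nil => rfl
  | cons i w ih => rw [List.cons_append, afpApp_cons, afpApp_cons, ih]

private lemma afpApp_comm {X : Type*} {n : ℕ} (T : Fin n → X → X)
    (hcomm : ∀ i j, T i ∘ T j = T j ∘ T i) (w : List (Fin n)) (j : Fin n) (x : X) :
    afpApp T w (T j x) = T j (afpApp T w x) := by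
  induction w generalizing x with
  | nil => rfl
  | cons i w ih =>
      rw [afpApp_cons, afpApp_cons]
      have h := congrFun (hcomm i j) x
      simp only [Function.comp] at h
      rw [h, ih]

/-- A finite commuting `γ`-contractive family of uniformly continuous self-maps of a
nonempty bounded metric space admits `ε`-approximate common fixed points for every
`ε > 0`. -/
theorem bounded_commuting_family_approx_fixed_points
    {X : Type*} [MetricSpace X] [Nonempty X]
    (hbdd : Bornology.IsBounded (Set.univ : Set X))
    (n : ℕ) (T : Fin n → X → X)
    (hUC : ∀ i, UniformContinuous (T i))
    (hcomm : ∀ i j, T i ∘ T j = T j ∘ T i)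
    (γ : ℝ) (hγ0 : 0 < γ) (hγ1 : γ < 1)
    (hcontr : ∀ x y : X, ∃ i, dist (T i x) (T i y) ≤ γ * dist x y) :
    ∀ ε : ℝ, 0 < ε → ∃ x : X, ∀ i, dist x (T i x) < ε := by
  intro ε hε
  obtain ⟨x0⟩ := ‹Nonempty X›
  -- diameter bound
  obtain ⟨D, hD⟩ := Metric.isBounded_iff.mp hbdd
  have hDbd : ∀ x y : X, dist x y ≤ D := fun x y =>
    hD (Set.mem_univ x) (Set.mem_univ y)
  have hD0 : 0 ≤ D := le_trans dist_nonneg (hDbd x0 x0)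
  have hD1 : (0:ℝ) < D + 1 := by linarith
  -- common modulus of uniform continuity
  have mod : ∀ η : ℝ, 0 < η → ∃ δ > 0, ∀ (j : Fin n) (a b : X),
      dist a b < δ → dist (T j a) (T j b) < η := by
    intro η hη
    rcases Nat.eq_zero_or_pos n with hn | hn
    · exact ⟨1, one_pos, fun j => by subst hn; exact absurd j.isLt (Nat.not_lt_zero _)⟩
    · have hne : Nonempty (Fin n) := ⟨⟨0, hn⟩⟩
      have h : ∀ j : Fin n, ∃ δ > 0, ∀ a b : X, dist a b < δ → dist (T j a) (T j b) < η := by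
        intro j
        obtain ⟨δ, hδ, hδ'⟩ := Metric.uniformContinuous_iff.mp (hUC j) η hη
        exact ⟨δ, hδ, fun a b hab => hδ' hab⟩
      choose δf hδf hδf' using h
      refine ⟨Finset.univ.inf' Finset.univ_nonempty δf, ?_, ?_⟩
      · exact (Finset.lt_inf'_iff _).mpr fun j _ => hδf j
      · intro j a b hab
        exact hδf' j a b (lt_of_lt_of_le hab (Finset.inf'_le _ (Finset.mem_univ j)))
  -- degradation control: words of bounded length
  have degrade : ∀ (η : ℝ), 0 < η → ∀ k : ℕ, ∃ δ > 0, ∀ w : List (Fin n), w.length ≤ k →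
      ∀ a b : X, dist a b < δ → dist (afpApp T w a) (afpApp T w b) < η := by
    intro η hη k
    induction k with
    | zero =>
        refine ⟨η, hη, fun w hw a b hab => ?_⟩
        have : w = [] := List.length_eq_zero_iff.mp (Nat.le_zero.mp hw)
        subst this
        simpa [afpApp_nil] using hab
    | succ k ih =>
        obtain ⟨δ, hδ, hδw⟩ := ih
        obtain ⟨δ', hδ', hδ'T⟩ := mod δ hδ
        refine ⟨min δ δ', lt_min hδ hδ', fun w hw a b hab => ?_⟩
        match w with
        | [] =>
            have := hδw [] (Nat.zero_le _) a b (lt_of_lt_of_le hab (min_le_left _ _))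
            simpa [afpApp_nil] using this
        | i :: w' =>
            rw [afpApp_cons, afpApp_cons]
            have h1 : dist (T i a) (T i b) < δ :=
              hδ'T i a b (lt_of_lt_of_le hab (min_le_right _ _))
            exact hδw w' (Nat.succ_le_succ_iff.mp hw) _ _ h1
  -- contraction words
  have contr : ∀ (m : ℕ) (x y : X), ∃ w : List (Fin n), w.length = m ∧
      dist (afpApp T w x) (afpApp T w y) ≤ γ ^ m * dist x y := by
    intro m x y
    induction m with
    | zero => exact ⟨[], rfl, by simp [afpApp_nil]⟩
    | succ m ih =>
        obtain ⟨w, hwl, hwd⟩ := ih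
        obtain ⟨i, hi⟩ := hcontr (afpApp T w x) (afpApp T w y)
        refine ⟨w ++ [i], by simp [hwl], ?_⟩
        rw [afpApp_append, afpApp_append]
        have h2 : γ * dist (afpApp T w x) (afpApp T w y) ≤ γ * (γ ^ m * dist x y) :=
          mul_le_mul_of_nonneg_left hwd (le_of_lt hγ0)
        calc dist (afpApp T [i] (afpApp T w x)) (afpApp T [i] (afpApp T w y))
            = dist (T i (afpApp T w x)) (T i (afpApp T w y)) := rfl
          _ ≤ γ * dist (afpApp T w x) (afpApp T w y) := hi
          _ ≤ γ * (γ ^ m * dist x y) := h2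
          _ = γ ^ (m + 1) * dist x y := by ring
  -- main induction: handle the first m indices
  have main : ∀ m : ℕ, ∀ η : ℝ, 0 < η → ∃ w : List (Fin n), ∀ i : Fin n, (i : ℕ) < m →
      dist (afpApp T w x0) (afpApp T w (T i x0)) < η := by
    intro m
    induction m with
    | zero => exact fun η hη => ⟨[], fun i hi => absurd hi (Nat.not_lt_zero _)⟩
    | succ m ih =>
        intro η hη
        by_cases hm : m < n
        · -- choose k with γ^k * (D+1) < η
          obtain ⟨k, hk⟩ := exists_pow_lt_of_lt_one (div_pos hη hD1) hγ1
          have hk' : γ ^ k * (D + 1) < η := by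
            rw [← lt_div_iff₀ hD1]; exact hk
          obtain ⟨δ, hδ, hdeg⟩ := degrade η hη k
          obtain ⟨w, hw⟩ := ih (min δ η) (lt_min hδ hη)
          set j : Fin n := ⟨m, hm⟩
          obtain ⟨v, hvl, hvd⟩ := contr k (afpApp T w x0) (afpApp T w (T j x0))
          refine ⟨w ++ v, fun i hi => ?_⟩
          rw [afpApp_append, afpApp_append]
          rcases Nat.lt_succ_iff_lt_or_eq.mp hi with hi' | hi'
          · -- old index: survives via degradation
            have h1 : dist (afpApp T w x0) (afpApp T w (T i x0)) < δ :=
              lt_of_lt_of_le (hw i hi') (min_le_left _ _)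
            exact hdeg v (le_of_eq hvl) _ _ h1
          · -- new index
            have hij : i = j := Fin.ext hi'
            subst hij
            calc dist (afpApp T v (afpApp T w x0)) (afpApp T v (afpApp T w (T j x0)))
                ≤ γ ^ k * dist (afpApp T w x0) (afpApp T w (T j x0)) := hvd
              _ ≤ γ ^ k * (D + 1) := by
                  apply mul_le_mul_of_nonneg_left _ (le_of_lt (pow_pos hγ0 k))
                  exact le_trans (hDbd _ _) (by linarith)
              _ < η := hk'
        · -- no new index
          obtain ⟨w, hw⟩ := ih η hη
          refine ⟨w, fun i hi => ?_⟩
          have : (i : ℕ) < m := lt_of_lt_of_le i.isLt (Nat.not_lt.mp hm)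
          exact hw i this
  obtain ⟨w, hw⟩ := main n ε hε
  refine ⟨afpApp T w x0, fun i => ?_⟩
  rw [← afpApp_comm T hcomm w i x0]
  exact hw i i.isLt
end

section
/- Let (X,ρ) be a nonempty bounded complete metric space, γ ∈ (0,1), and let F = {T₁,…,Tₙ} be a finite γ-contractive family of uniformly continuous self-maps of X which pairwise commute. Then F has a unique common fixed point: there is exactly one y ∈ X with T_i(y) = y for all i ≤ n. -/
namespace CommFixAux

variable {X : Type*} [MetricSpace X] {n : ℕ} (T : Fin n → X → X)

/-- Composition of a word of maps. -/
def comp : List (Fin n) → X → X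
  | [], x => x
  | i :: w, x => T i (comp w x)

lemma comp_append (a b : List (Fin n)) (x : X) :
    comp T (a ++ b) x = comp T a (comp T b x) := by
  induction a with
  | nil => rfl
  | cons i a ih => simp [comp, ih]

lemma comp_comm (hcomm : ∀ i j, T i ∘ T j = T j ∘ T i) (w : List (Fin n)) (i : Fin n) (x : X) :
    comp T w (T i x) = T i (comp T w x) := by
  induction w with
  | nil => rfl
  | cons j w ih =>
    simp only [comp, ih]
    exact congrFun (hcomm j i) _

lemma step_delta (hUC : ∀ i, UniformContinuous (T i)) [Nonempty (Fin n)]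
    {ε : ℝ} (hε : 0 < ε) :
    ∃ δ > 0, ∀ (i : Fin n) (x y : X), dist x y < δ → dist (T i x) (T i y) < ε := by
  have h : ∀ i : Fin n, ∃ δ > 0, ∀ x y : X, dist x y < δ → dist (T i x) (T i y) < ε := by
    intro i
    rcases Metric.uniformContinuous_iff.mp (hUC i) ε hε with ⟨δ, hδ, H⟩
    exact ⟨δ, hδ, fun x y h => H h⟩
  choose δ hδ H using h
  refine ⟨Finset.univ.inf' Finset.univ_nonempty δ, ?_, ?_⟩
  · exact (Finset.lt_inf'_iff _).mpr fun i _ => hδ i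
  · intro i x y hxy
    exact H i x y (lt_of_lt_of_le hxy (Finset.inf'_le _ (Finset.mem_univ i)))

lemma equicont (hUC : ∀ i, UniformContinuous (T i)) [Nonempty (Fin n)]
    (m : ℕ) {ε : ℝ} (hε : 0 < ε) :
    ∃ δ > 0, ∀ w : List (Fin n), w.length ≤ m →
      ∀ x y : X, dist x y < δ → dist (comp T w x) (comp T w y) < ε := by
  induction m generalizing ε with
  | zero =>
    refine ⟨ε, hε, ?_⟩
    intro w hw x y hxy
    rw [List.length_eq_zero_iff.mp (Nat.le_zero.mp hw)]
    exact hxy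
  | succ m ih =>
    obtain ⟨δ₁, hδ₁, H₁⟩ := step_delta T hUC hε
    obtain ⟨δ₂, hδ₂, H₂⟩ := ih hδ₁
    refine ⟨min δ₂ ε, lt_min hδ₂ hε, ?_⟩
    intro w hw x y hxy
    match w with
    | [] => exact lt_of_lt_of_le hxy (min_le_right _ _)
    | i :: w =>
      have hw' : w.length ≤ m := Nat.succ_le_succ_iff.mp hw
      exact H₁ i _ _ (H₂ w hw' x y (lt_of_lt_of_le hxy (min_le_left _ _)))

lemma contract {γ : ℝ} (hγ0 : 0 ≤ γ)
    (hcontr : ∀ x y : X, ∃ i, dist (T i x) (T i y) ≤ γ * dist x y)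
    (m : ℕ) (x y : X) :
    ∃ w : List (Fin n), w.length = m ∧
      dist (comp T w x) (comp T w y) ≤ γ ^ m * dist x y := by
  induction m with
  | zero => exact ⟨[], rfl, by simp [comp]⟩
  | succ m ih =>
    obtain ⟨w, hl, hw⟩ := ih
    obtain ⟨i, hi⟩ := hcontr (comp T w x) (comp T w y)
    refine ⟨i :: w, by simp [hl], ?_⟩
    calc dist (comp T (i :: w) x) (comp T (i :: w) y)
        ≤ γ * dist (comp T w x) (comp T w y) := hi
      _ ≤ γ * (γ ^ m * dist x y) := mul_le_mul_of_nonneg_left hw hγ0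
      _ = γ ^ (m + 1) * dist x y := by ring

lemma approx (hUC : ∀ i, UniformContinuous (T i)) [Nonempty (Fin n)]
    {D : ℝ} (hbdd : ∀ x y : X, dist x y ≤ D)
    {γ : ℝ} (hγ0 : 0 ≤ γ) (hγ1 : γ < 1)
    (hcontr : ∀ x y : X, ∃ i, dist (T i x) (T i y) ≤ γ * dist x y)
    (s : Finset (Fin n)) (x : X) :
    ∀ ε : ℝ, 0 < ε → ∃ w : List (Fin n),
      ∀ i ∈ s, dist (comp T w (T i x)) (comp T w x) ≤ ε := by
  induction s using Finset.induction_on with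
  | empty => exact fun ε hε => ⟨[], fun i hi => absurd hi (Finset.notMem_empty i)⟩
  | @insert a s ha ih =>
    intro ε hε
    have hD : 0 ≤ D := le_trans dist_nonneg (hbdd x x)
    -- choose m with γ ^ m * D < ε
    have hεD : 0 < ε / (D + 1) := by positivity
    obtain ⟨m, hm⟩ := exists_pow_lt_of_lt_one hεD hγ1
    have hmD : γ ^ m * D < ε := by
      have h1 : γ ^ m * (D + 1) < ε := (lt_div_iff₀ (by linarith)).mp hm
      nlinarith [pow_nonneg hγ0 m]
    obtain ⟨δ, hδ, Hδ⟩ := equicont T hUC m hε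
    obtain ⟨w₁, hw₁⟩ := ih (δ / 2) (by linarith)
    obtain ⟨w₂, hl₂, hw₂⟩ := contract T hγ0 hcontr m (comp T w₁ (T a x)) (comp T w₁ x)
    refine ⟨w₂ ++ w₁, ?_⟩
    intro i hi
    rw [comp_append, comp_append]
    rcases Finset.mem_insert.mp hi with rfl | hi
    · calc dist (comp T w₂ (comp T w₁ (T i x))) (comp T w₂ (comp T w₁ x))
          ≤ γ ^ m * dist (comp T w₁ (T i x)) (comp T w₁ x) := hw₂
        _ ≤ γ ^ m * D := mul_le_mul_of_nonneg_left (hbdd _ _) (pow_nonneg hγ0 m)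
        _ ≤ ε := le_of_lt hmD
    · have h1 : dist (comp T w₁ (T i x)) (comp T w₁ x) < δ :=
        lt_of_le_of_lt (hw₁ i hi) (by linarith)
      exact le_of_lt (Hδ w₂ (le_of_eq hl₂) _ _ h1)

end CommFixAux

open CommFixAux

/-- A finite commuting `γ`-contractive family of uniformly continuous self-maps of a
nonempty bounded complete metric space has exactly one common fixed point. -/
theorem bounded_commuting_family_common_fixed_point
    {X : Type*} [MetricSpace X] [CompleteSpace X] [Nonempty X]
    (hbdd : Bornology.IsBounded (Set.univ : Set X))
    (n : ℕ) (T : Fin n → X → X)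
    (hUC : ∀ i, UniformContinuous (T i))
    (hcomm : ∀ i j, T i ∘ T j = T j ∘ T i)
    (γ : ℝ) (hγ0 : 0 < γ) (hγ1 : γ < 1)
    (hcontr : ∀ x y : X, ∃ i, dist (T i x) (T i y) ≤ γ * dist x y) :
    ∃! y : X, ∀ i, T i y = y := by
  obtain ⟨x₀⟩ := ‹Nonempty X›
  obtain ⟨i₀, -⟩ := hcontr x₀ x₀
  have hne : Nonempty (Fin n) := ⟨i₀⟩
  obtain ⟨D, hD⟩ := Metric.isBounded_iff.mp hbdd
  have hD' : ∀ x y : X, dist x y ≤ D := fun x y =>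
    hD (Set.mem_univ x) (Set.mem_univ y)
  -- approximate common fixed points
  have key : ∀ k : ℕ, ∃ z : X, ∀ i, dist (T i z) z ≤ 1 / (k + 1) := by
    intro k
    obtain ⟨w, hw⟩ := approx T hUC hD' hγ0.le hγ1 hcontr Finset.univ x₀
      (1 / (k + 1)) (by positivity)
    refine ⟨comp T w x₀, fun i => ?_⟩
    have := hw i (Finset.mem_univ i)
    rwa [comp_comm T hcomm] at this
  choose y hy using key
  -- Cauchy estimate
  have hest : ∀ p q : ℕ, dist (y p) (y q) ≤ (1 / (p + 1) + 1 / (q + 1)) / (1 - γ) := by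
    intro p q
    obtain ⟨i, hi⟩ := hcontr (y p) (y q)
    have h1 := hy p i
    have h2 := hy q i
    have h3 : dist (y p) (y q) ≤
        dist (y p) (T i (y p)) + dist (T i (y p)) (T i (y q)) + dist (T i (y q)) (y q) :=
      dist_triangle4 _ _ _ _
    rw [le_div_iff₀ (by linarith)]
    rw [dist_comm (y p) (T i (y p))] at h3
    nlinarith [dist_nonneg (x := y p) (y := y q)]
  have hcau : CauchySeq y := by
    apply cauchySeq_of_le_tendsto_0 (fun N : ℕ => (2 / (N + 1)) / (1 - γ))
    · intro p q N hp hq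
      refine le_trans (hest p q) ?_
      have h1 : (1 : ℝ) / (p + 1) ≤ 1 / (N + 1) := by
        apply one_div_le_one_div_of_le (by positivity)
        exact_mod_cast Nat.succ_le_succ hp
      have h2 : (1 : ℝ) / (q + 1) ≤ 1 / (N + 1) := by
        apply one_div_le_one_div_of_le (by positivity)
        exact_mod_cast Nat.succ_le_succ hq
      have h3 : (1:ℝ) / (p + 1) + 1 / (q + 1) ≤ 2 / (N + 1) := by
        have : (2:ℝ) / (N + 1) = 1 / (N + 1) + 1 / (N + 1) := by ring
        linarith
      gcongr
    · have h : Filter.Tendsto (fun N : ℕ => (1 : ℝ) / (N + 1)) Filter.atTop (nhds 0) :=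
        tendsto_one_div_add_atTop_nhds_zero_nat
      have h2 := (h.const_mul (2 / (1 - γ)))
      simp only [mul_zero] at h2
      convert h2 using 2 with N
      field_simp
  obtain ⟨z, hz⟩ := cauchySeq_tendsto_of_complete hcau
  have hzfix : ∀ i, T i z = z := by
    intro i
    have hTz : Filter.Tendsto (fun k => T i (y k)) Filter.atTop (nhds (T i z)) :=
      ((hUC i).continuous.tendsto z).comp hz
    have hdist : Filter.Tendsto (fun k => dist (T i (y k)) (y k)) Filter.atTop
        (nhds (dist (T i z) z)) := hTz.dist hz
    have hle : dist (T i z) z ≤ 0 :=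
      le_of_tendsto_of_tendsto' hdist tendsto_one_div_add_atTop_nhds_zero_nat
        (fun k => hy k i)
    exact dist_le_zero.mp hle
  refine ⟨z, hzfix, ?_⟩
  intro u hu
  obtain ⟨i, hi⟩ := hcontr u z
  rw [hu i, hzfix i] at hi
  have h0 : dist u z ≤ 0 := by nlinarith [dist_nonneg (x := u) (y := z)]
  exact dist_le_zero.mp h0
end
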